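/- arXiv:1905.13552 — 16 statements merged into one kernel-verified Lean document; each statement's English description precedes it below -/
import Mathlib

section
/- If X is a reflexive and locally uniformly rotund Banach space, then the pair (X, 𝕂) has property L_{o,p}: for every ε > 0 and every x ∈ S_X there is η(ε, x) > 0 such that whenever x* ∈ S_{X*} satisfies |x*(x)| > 1 − η(ε, x), there exists x₀ ∈ S_X with |x*(x₀)| = 1 and ‖x₀ − x‖ < ε. -/
/-- The pair `(X, Y)` has property `L_{o,p}`: for every `ε > 0` and `x ∈ S_X` there is
`η(ε, x) > 0` such that any norm-one operator `T` with `‖T x‖ > 1 - η` attains its norm at a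
point `x₀ ∈ S_X` with `‖x₀ - x‖ < ε`. -/
def HasLop (𝕜 X Y : Type*) [RCLike 𝕜] [NormedAddCommGroup X] [NormedSpace 𝕜 X]
    [NormedAddCommGroup Y] [NormedSpace 𝕜 Y] : Prop :=
  ∀ ε : ℝ, 0 < ε → ∀ x : X, ‖x‖ = 1 →
    ∃ η : ℝ, 0 < η ∧ ∀ T : X →L[𝕜] Y, ‖T‖ = 1 → 1 - η < ‖T x‖ →
      ∃ x₀ : X, ‖x₀‖ = 1 ∧ ‖T x₀‖ = 1 ∧ ‖x₀ - x‖ < ε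

/-- The pair `(X, Y)` has property `L_{p,o}`: for every `ε > 0` and norm-one operator `T` there
is `η(ε, T) > 0` such that whenever `x ∈ S_X` satisfies `‖T x‖ > 1 - η`, there is a norm-one
operator `S` attaining its norm at `x` with `‖S - T‖ < ε`. -/
def HasLpo (𝕜 X Y : Type*) [RCLike 𝕜] [NormedAddCommGroup X] [NormedSpace 𝕜 X]
    [NormedAddCommGroup Y] [NormedSpace 𝕜 Y] : Prop :=
  ∀ ε : ℝ, 0 < ε → ∀ T : X →L[𝕜] Y, ‖T‖ = 1 →
    ∃ η : ℝ, 0 < η ∧ ∀ x : X, ‖x‖ = 1 → 1 - η < ‖T x‖ →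
      ∃ S : X →L[𝕜] Y, ‖S‖ = 1 ∧ ‖S x‖ = 1 ∧ ‖S - T‖ < ε

/-!
Given `x ∈ S_X` and a norm-one functional `f` with `|f x|` close to `1`, reflexivity lets `f`
attain its norm at some `z ∈ S_X`; rotating `z` by a unimodular scalar so that `f` takes
values of the same phase at `z` and at `x` gives `w ∈ S_X` with `|f w| = 1` and
`‖w + x‖ ≥ |f (w + x)| = 1 + |f x|`, close to `2`. Local uniform rotundity at `x`, in its
`ε`-`δ` form, then makes `‖w - x‖` small.
-/

open Filter Topology

theorem exists_pos_forall_norm_sub_lt_of_lur {X : Type*} [SeminormedAddCommGroup X] {x : X}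
    (hx : ‖x‖ = 1)
    (hLUR : ∀ xn : ℕ → X, (∀ n, ‖xn n‖ = 1) →
      Tendsto (fun n => ‖xn n + x‖) atTop (𝓝 2) → Tendsto (fun n => ‖xn n - x‖) atTop (𝓝 0))
    {ε : ℝ} (hε : 0 < ε) :
    ∃ δ > 0, ∀ y : X, ‖y‖ = 1 → 2 - δ < ‖y + x‖ → ‖y - x‖ < ε := by
  by_contra! h
  choose y hy_norm hy_add hy_sub using fun n : ℕ => h (1 / (n + 1)) Nat.one_div_pos_of_nat
  have hlim : Tendsto (fun n => ‖y n + x‖) atTop (𝓝 2) := by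
    have hlow : Tendsto (fun n : ℕ => 2 - 1 / ((n : ℝ) + 1)) atTop (𝓝 2) := by
      simpa using tendsto_one_div_add_atTop_nhds_zero_nat.const_sub (2 : ℝ)
    refine tendsto_of_tendsto_of_tendsto_of_le_of_le hlow tendsto_const_nhds
      (fun n => (hy_add n).le) fun n => ?_
    calc ‖y n + x‖ ≤ ‖y n‖ + ‖x‖ := norm_add_le _ _
      _ = 2 := by rw [hy_norm, hx]; norm_num
  obtain ⟨n, hn⟩ := ((hLUR y hy_norm hlim).eventually (gt_mem_nhds hε)).exists
  exact (hy_sub n).not_gt hn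

theorem exists_norm_eq_one_apply_eq_norm_of_surjective_inclusionInDoubleDual
    {𝕜 X : Type*} [RCLike 𝕜] [SeminormedAddCommGroup X] [NormedSpace 𝕜 X]
    (hrefl : Function.Surjective (NormedSpace.inclusionInDoubleDual 𝕜 X))
    {f : StrongDual 𝕜 X} (hf : ‖f‖ ≠ 0) :
    ∃ z : X, ‖z‖ = 1 ∧ f z = ‖f‖ := by
  obtain ⟨F, hF_norm, hF_apply⟩ := exists_dual_vector 𝕜 f hf
  obtain ⟨z, rfl⟩ := hrefl F
  exact ⟨z, (NormedSpace.inclusionInDoubleDualLi 𝕜).norm_map z ▸ hF_norm, hF_apply⟩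

theorem exists_norm_eq_one_one_add_norm_apply_le_norm_smul_add
    {𝕜 X : Type*} [RCLike 𝕜] [SeminormedAddCommGroup X] [NormedSpace 𝕜 X]
    {f : StrongDual 𝕜 X} (hf : ‖f‖ ≤ 1) {z : X} (hz : f z = 1) (x : X) :
    ∃ c : 𝕜, ‖c‖ = 1 ∧ 1 + ‖f x‖ ≤ ‖c • z + x‖ := by
  obtain ⟨c, hc, hcx⟩ := RCLike.exists_norm_mul_eq_self (f x)
  refine ⟨c, hc, ?_⟩
  have hf_apply : f (c • z + x) = c * ((1 + ‖f x‖ : ℝ) : 𝕜) := by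
    rw [map_add, map_smul, hz, smul_eq_mul]
    push_cast
    linear_combination -hcx
  calc 1 + ‖f x‖ = ‖f (c • z + x)‖ := by
        rw [hf_apply, norm_mul, hc, one_mul, RCLike.norm_ofReal, abs_of_nonneg (by positivity)]
    _ ≤ ‖f‖ * ‖c • z + x‖ := f.le_opNorm _
    _ ≤ ‖c • z + x‖ := mul_le_of_le_one_left (norm_nonneg _) hf

theorem lop_of_reflexive_of_lur_general (𝕜 X : Type*) [RCLike 𝕜] [NormedAddCommGroup X]
    [NormedSpace 𝕜 X]
    (hrefl : Function.Surjective (NormedSpace.inclusionInDoubleDual 𝕜 X))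
    (hLUR : ∀ x : X, ‖x‖ = 1 → ∀ xn : ℕ → X, (∀ n, ‖xn n‖ = 1) →
      Filter.Tendsto (fun n => ‖xn n + x‖) Filter.atTop (nhds 2) →
      Filter.Tendsto (fun n => ‖xn n - x‖) Filter.atTop (nhds 0)) :
    HasLop 𝕜 X 𝕜 := by
  intro ε hε x hx
  obtain ⟨δ, hδ, hclose⟩ := exists_pos_forall_norm_sub_lt_of_lur hx (hLUR x hx) hε
  refine ⟨δ, hδ, fun T hT hTx => ?_⟩
  obtain ⟨z, hz_norm, hz_apply⟩ :=
    exists_norm_eq_one_apply_eq_norm_of_surjective_inclusionInDoubleDual hrefl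
      (f := T) (by rw [hT]; exact one_ne_zero)
  rw [hT, RCLike.ofReal_one] at hz_apply
  obtain ⟨c, hc, hadd⟩ := exists_norm_eq_one_one_add_norm_apply_le_norm_smul_add hT.le hz_apply x
  have hw_norm : ‖c • z‖ = 1 := by rw [norm_smul, hc, hz_norm, one_mul]
  refine ⟨c • z, hw_norm, by rw [map_smul, hz_apply, smul_eq_mul, mul_one, hc], ?_⟩
  exact hclose _ hw_norm (by linarith)

/-- If  is a reflexive and locally uniformly rotund Banach space, then the
pair  has property . -/
theorem lop_of_reflexive_of_lur (𝕜 X : Type*) [RCLike 𝕜] [NormedAddCommGroup X]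
    [NormedSpace 𝕜 X] [CompleteSpace X]
    (hrefl : Function.Surjective (NormedSpace.inclusionInDoubleDual 𝕜 X))
    (hLUR : ∀ x : X, ‖x‖ = 1 → ∀ xn : ℕ → X, (∀ n, ‖xn n‖ = 1) →
      Filter.Tendsto (fun n => ‖xn n + x‖) Filter.atTop (nhds 2) →
      Filter.Tendsto (fun n => ‖xn n - x‖) Filter.atTop (nhds 0)) :
    HasLop 𝕜 X 𝕜 :=
  lop_of_reflexive_of_lur_general 𝕜 X hrefl hLUR
end

section
/- If a Banach space X has the Radon–Nikodým property and the pair (X, 𝕂) has property L_{o,p}, then X is strictly convex. -/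
/-- A norm-one functional `f` strongly exposes the unit ball of `X` at some point `x ∈ S_X`:
`Re (f x) = 1` and every sequence in the unit ball along which `Re ∘ f` tends to `1` converges
to `x`. -/
def StronglyExposes {𝕜 X : Type*} [RCLike 𝕜] [NormedAddCommGroup X] [NormedSpace 𝕜 X]
    (f : X →L[𝕜] 𝕜) : Prop :=
  ∃ x : X, ‖x‖ = 1 ∧ RCLike.re (f x) = 1 ∧
    ∀ z : ℕ → X, (∀ n, ‖z n‖ ≤ 1) →
      Filter.Tendsto (fun n => RCLike.re (f (z n))) Filter.atTop (nhds 1) →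
      Filter.Tendsto z Filter.atTop (nhds x)

/-!
If `‖x + y‖ = 2` with `x ≠ y`, take a strongly exposing functional `g` that almost norms `x + y`;
then `Re g` is almost `1` at both `x` and `y`. Property `L_{o,p}` moves `x` and `y` slightly to
points where `|g| = 1`, and rotating these by unimodular scalars lands both where `Re g = 1`. The
exposed point is unique, so it lies close to both `x` and `y`, which is absurd for `x ≠ y`.
-/

open RCLike ComplexConjugate

lemma RCLike.norm_sub_one_sq_eq_of_norm_eq_one {𝕜 : Type*} [RCLike 𝕜] {a : 𝕜} (ha : ‖a‖ = 1) :
    ‖a - 1‖ ^ 2 = 2 * (1 - re a) := by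
  rw [@norm_sub_sq 𝕜, ha, inner_apply, one_mul, conj_re, norm_one]
  ring

section

variable {𝕜 X : Type*} [RCLike 𝕜] [NormedAddCommGroup X] [NormedSpace 𝕜 X]

lemma StronglyExposes.eq_of_re_eq_one {g : X →L[𝕜] 𝕜} (hg : StronglyExposes g) {z w : X}
    (hz : ‖z‖ ≤ 1) (hw : ‖w‖ ≤ 1) (hgz : re (g z) = 1) (hgw : re (g w) = 1) : z = w := by
  obtain ⟨u, -, -, hu⟩ := hg
  have eq_u : ∀ v : X, ‖v‖ ≤ 1 → re (g v) = 1 → v = u := fun v hv hgv =>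
    tendsto_nhds_unique tendsto_const_nhds (hu (fun _ => v) (fun _ => hv) (by simp [hgv]))
  rw [eq_u z hz hgz, eq_u w hw hgw]

lemma exists_re_apply_eq_one_of_norm_apply_eq_one (g : X →L[𝕜] 𝕜) {x : X} (hx : ‖x‖ = 1)
    (hgx : ‖g x‖ = 1) :
    ∃ z : X, ‖z‖ = 1 ∧ re (g z) = 1 ∧ ‖z - x‖ ^ 2 = 2 * (1 - re (g x)) := by
  refine ⟨conj (g x) • x, ?_, ?_, ?_⟩
  · rw [norm_smul, norm_conj, hgx, hx, one_mul]
  · rw [map_smul, smul_eq_mul, RCLike.conj_mul, hgx]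
    simp
  · rw [show conj (g x) • x - x = (conj (g x) - 1) • x by rw [sub_smul, one_smul], norm_smul,
      hx, mul_one, ← map_one conj, ← map_sub, norm_conj, norm_sub_one_sq_eq_of_norm_eq_one hgx]

lemma HasLop.exists_re_apply_eq_one (h : HasLop 𝕜 X 𝕜) {ε : ℝ} (hε : 0 < ε) {x : X}
    (hx : ‖x‖ = 1) :
    ∃ η > 0, ∀ g : X →L[𝕜] 𝕜, ‖g‖ = 1 → 1 - η < re (g x) →
      ∃ z : X, ‖z‖ = 1 ∧ re (g z) = 1 ∧ ‖z - x‖ < ε := by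
  -- the rotation step only controls `‖z - x₀‖ ^ 2`, hence the `ε ^ 2`
  set ε' := min (ε / 2) (ε ^ 2 / 16)
  have hε' : 0 < ε' := by positivity
  obtain ⟨η, hη, hlop⟩ := h ε' hε' x hx
  refine ⟨min η ε', lt_min hη hε', fun g hg hgx => ?_⟩
  obtain ⟨x₀, hx₀, hgx₀, hx₀x⟩ := hlop g hg <|
    (sub_le_sub_left (min_le_left _ _) 1).trans_lt (hgx.trans_le (re_le_norm _))
  obtain ⟨z, hz, hgz, hzx₀⟩ := exists_re_apply_eq_one_of_norm_apply_eq_one g hx₀ hgx₀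
  have hre : re (g x) - re (g x₀) < ε' := calc
    re (g x) - re (g x₀) = re (g (x - x₀)) := by simp
    _ ≤ ‖g (x - x₀)‖ := re_le_norm _
    _ ≤ ‖g‖ * ‖x - x₀‖ := g.le_opNorm _
    _ < ε' := by rwa [hg, one_mul, norm_sub_rev]
  have hzx₀' : ‖z - x₀‖ < ε / 2 := by
    refine lt_of_pow_lt_pow_left₀ 2 (by positivity) ?_
    rw [hzx₀]
    linarith [min_le_right η ε', min_le_right (ε / 2) (ε ^ 2 / 16)]
  refine ⟨z, hz, hgz, ?_⟩
  calc ‖z - x‖ ≤ ‖z - x₀‖ + ‖x₀ - x‖ := norm_sub_le_norm_sub_add_norm_sub _ _ _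
    _ < ε / 2 + ε / 2 := add_lt_add hzx₀' (hx₀x.trans_le (min_le_left _ _))
    _ = ε := add_halves ε

lemma exists_stronglyExposes_re_apply_gt
    (hRNP : ∀ f : X →L[𝕜] 𝕜, ‖f‖ = 1 → ∀ δ : ℝ, 0 < δ →
      ∃ g : X →L[𝕜] 𝕜, ‖g‖ = 1 ∧ StronglyExposes g ∧ ‖g - f‖ < δ)
    {w : X} (hw : w ≠ 0) {δ : ℝ} (hδ : 0 < δ) :
    ∃ g : X →L[𝕜] 𝕜, ‖g‖ = 1 ∧ StronglyExposes g ∧ ‖w‖ - δ < re (g w) := by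
  obtain ⟨f, hf, hfw⟩ := exists_dual_vector 𝕜 w (norm_ne_zero_iff.2 hw)
  have hw' : 0 < ‖w‖ := norm_pos_iff.2 hw
  obtain ⟨g, hg, hexp, hgf⟩ := hRNP f hf (δ / ‖w‖) (div_pos hδ hw')
  refine ⟨g, hg, hexp, ?_⟩
  have : ‖w‖ - re (g w) < δ := calc
    ‖w‖ - re (g w) = re ((f - g) w) := by simp [hfw]
    _ ≤ ‖(f - g) w‖ := re_le_norm _
    _ ≤ ‖f - g‖ * ‖w‖ := (f - g).le_opNorm w
    _ < δ / ‖w‖ * ‖w‖ := by rw [norm_sub_rev]; gcongr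
    _ = δ := div_mul_cancel₀ _ hw'.ne'
  linarith

end

theorem strictlyConvex_of_rnp_of_lop_general (𝕜 X : Type*) [RCLike 𝕜] [NormedAddCommGroup X]
    [NormedSpace 𝕜 X]
    (hRNP : ∀ f : X →L[𝕜] 𝕜, ‖f‖ = 1 → ∀ δ : ℝ, 0 < δ →
      ∃ g : X →L[𝕜] 𝕜, ‖g‖ = 1 ∧ StronglyExposes g ∧ ‖g - f‖ < δ)
    (h : HasLop 𝕜 X 𝕜) :
    ∀ x y : X, ‖x‖ = 1 → ‖y‖ = 1 → x ≠ y → ‖x + y‖ / 2 < 1 := by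
  intro x y hx hy hxy
  by_contra! hxy₂
  have hd : 0 < ‖x - y‖ := norm_pos_iff.2 (sub_ne_zero.2 hxy)
  obtain ⟨ηx, hηx, hlopx⟩ := h.exists_re_apply_eq_one (half_pos hd) hx
  obtain ⟨ηy, hηy, hlopy⟩ := h.exists_re_apply_eq_one (half_pos hd) hy
  have hw : x + y ≠ 0 := by rintro hw; norm_num [hw] at hxy₂
  obtain ⟨g, hg, hexp, hgw⟩ := exists_stronglyExposes_re_apply_gt hRNP hw (lt_min hηx hηy)
  have hle : ∀ v : X, ‖v‖ = 1 → re (g v) ≤ 1 := fun v hv =>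
    (re_le_norm _).trans (by simpa [hg, hv] using g.le_opNorm v)
  rw [map_add, map_add] at hgw
  obtain ⟨z, hz, hgz, hzx⟩ := hlopx g hg <| by
    linarith [hle x hx, hle y hy, min_le_left ηx ηy]
  obtain ⟨z', hz', hgz', hzy⟩ := hlopy g hg <| by
    linarith [hle x hx, hle y hy, min_le_right ηx ηy]
  obtain rfl := hexp.eq_of_re_eq_one hz.le hz'.le hgz hgz'
  linarith [norm_sub_le_norm_sub_add_norm_sub x z y, norm_sub_rev x z]

/-- If `X` is a Banach space with the Radon–Nikodym property (here expressed
through its relevant consequence: the strongly exposing functionals are norm dense in the unit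
sphere of the dual) and the pair `(X, 𝕜)` has property `L_{o,p}`, then `X` is strictly convex. -/
theorem strictlyConvex_of_rnp_of_lop (𝕜 X : Type*) [RCLike 𝕜] [NormedAddCommGroup X]
    [NormedSpace 𝕜 X] [CompleteSpace X]
    (hRNP : ∀ f : X →L[𝕜] 𝕜, ‖f‖ = 1 → ∀ δ : ℝ, 0 < δ →
      ∃ g : X →L[𝕜] 𝕜, ‖g‖ = 1 ∧ StronglyExposes g ∧ ‖g - f‖ < δ)
    (h : HasLop 𝕜 X 𝕜) :
    ∀ x y : X, ‖x‖ = 1 → ‖y‖ = 1 → x ≠ y → ‖x + y‖ / 2 < 1 :=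
  strictlyConvex_of_rnp_of_lop_general 𝕜 X hRNP h
end

section
/- Let X be a Banach space. If the pair (X*, 𝕂) has property L_{o,p}, then the pair (X, 𝕂) has property L_{p,o}. -/
/-- If the pair  has property , then the pair  has
property . -/
theorem lpo_of_dual_lop (𝕜 X : Type*) [RCLike 𝕜] [NormedAddCommGroup X]
    [NormedSpace 𝕜 X] [CompleteSpace X]
    (h : HasLop 𝕜 (X →L[𝕜] 𝕜) 𝕜) : HasLpo 𝕜 X 𝕜 := by
  intro ε hε T hT
  obtain ⟨η, hη, hmain⟩ := h ε hε T hT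
  refine ⟨η, hη, fun x hx hTx => ?_⟩
  have hΦnorm : ‖NormedSpace.inclusionInDoubleDual 𝕜 X x‖ = 1 := by
    rw [show NormedSpace.inclusionInDoubleDual 𝕜 X x = NormedSpace.inclusionInDoubleDualLi 𝕜 (E := X) x from rfl, (NormedSpace.inclusionInDoubleDualLi 𝕜 (E := X)).norm_map]; exact hx
  obtain ⟨S, hS1, hS2, hS3⟩ := hmain (NormedSpace.inclusionInDoubleDual 𝕜 X x) hΦnorm hTx
  exact ⟨S, hS1, hS2, hS3⟩
end

section
/- Let X be a reflexive Banach space. Then the pair (X, 𝕂) has property L_{p,o} if and only if the pair (X*, 𝕂) has property L_{o,p}. -/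
/-- If  is a reflexive Banach space, then  has property 
if and only if  has property . -/
theorem lpo_iff_dual_lop (𝕜 X : Type*) [RCLike 𝕜] [NormedAddCommGroup X]
    [NormedSpace 𝕜 X] [CompleteSpace X]
    (hrefl : Function.Surjective (NormedSpace.inclusionInDoubleDual 𝕜 X)) :
    HasLpo 𝕜 X 𝕜 ↔ HasLop 𝕜 (X →L[𝕜] 𝕜) 𝕜 := by
  have hnorm : ∀ x : X, ‖NormedSpace.inclusionInDoubleDual 𝕜 X x‖ = ‖x‖ :=
    fun x => (NormedSpace.inclusionInDoubleDualLi (𝕜 := 𝕜) (E := X)).norm_map x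
  constructor
  · intro h ε hε xs hxs
    obtain ⟨η, hη, hforall⟩ := h ε hε xs hxs
    refine ⟨η, hη, fun T hT hTx => ?_⟩
    obtain ⟨x, hx⟩ := hrefl T
    have hxnorm : ‖x‖ = 1 := by rw [← hnorm x, hx, hT]
    have hTx' : 1 - η < ‖xs x‖ := by
      have : T xs = xs x := by rw [← hx]; exact NormedSpace.dual_def 𝕜 X x xs
      rwa [this] at hTx
    obtain ⟨S, hS, hSx, hSd⟩ := hforall x hxnorm hTx'
    refine ⟨S, hS, ?_, hSd⟩
    have : T S = S x := by rw [← hx]; exact NormedSpace.dual_def 𝕜 X x S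
    rw [this]; exact hSx
  · intro h ε hε T hT
    obtain ⟨η, hη, hforall⟩ := h ε hε T hT
    refine ⟨η, hη, fun x hx hTx => ?_⟩
    have hJx : ‖NormedSpace.inclusionInDoubleDual 𝕜 X x‖ = 1 := by rw [hnorm x, hx]
    have hJT : 1 - η < ‖NormedSpace.inclusionInDoubleDual 𝕜 X x T‖ := by
      rwa [NormedSpace.dual_def]
    obtain ⟨S, hS, hJS, hSd⟩ := hforall (NormedSpace.inclusionInDoubleDual 𝕜 X x) hJx hJT
    rw [NormedSpace.dual_def] at hJS
    exact ⟨S, hS, hJS, hSd⟩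
end

section
/- If X is a reflexive Banach space whose dual X* is locally uniformly rotund, then the pair (X, 𝕂) has property L_{p,o}. -/
/-!
If `x n` runs over the unit sphere with `‖T (x n)‖ → 1`, pick norming functionals `S n` at `x n`,
rotated so that `S n (x n)` has the same phase as `T (x n)`. Then
`‖S n + T‖ ≥ ‖(S n + T) (x n)‖ = 1 + ‖T (x n)‖ → 2`, so local uniform rotundity of the dual at `T`
forces `S n → T`.
-/

open Filter Topology

def LocallyUniformlyRotund (E : Type*) [SeminormedAddCommGroup E] : Prop :=
  ∀ f : E, ‖f‖ = 1 → ∀ fn : ℕ → E, (∀ n, ‖fn n‖ = 1) →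
    Tendsto (fun n => ‖fn n + f‖) atTop (𝓝 2) → Tendsto (fun n => ‖fn n - f‖) atTop (𝓝 0)

theorem LocallyUniformlyRotund.tendsto_norm_sub_of_le {E : Type*} [SeminormedAddCommGroup E]
    (hE : LocallyUniformlyRotund E) {f : E} (hf : ‖f‖ = 1) {fn : ℕ → E}
    (hfn : ∀ n, ‖fn n‖ = 1) {δ : ℕ → ℝ} (hδ : Tendsto δ atTop (𝓝 0))
    (hle : ∀ n, 2 - δ n ≤ ‖fn n + f‖) :
    Tendsto (fun n => ‖fn n - f‖) atTop (𝓝 0) := by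
  refine hE f hf fn hfn (tendsto_of_tendsto_of_tendsto_of_le_of_le ?_ tendsto_const_nhds hle
    fun n => ?_)
  · simpa using (tendsto_const_nhds (x := (2 : ℝ))).sub hδ
  · calc ‖fn n + f‖ ≤ ‖fn n‖ + ‖f‖ := norm_add_le _ _
      _ = 2 := by rw [hfn n, hf]; norm_num

theorem exists_norming_functional_one_add_norm_le_norm_add {𝕜 X : Type*} [RCLike 𝕜] [NormedAddCommGroup X]
    [NormedSpace 𝕜 X] (f : X →L[𝕜] 𝕜) {x : X} (hx : ‖x‖ = 1) :
    ∃ g : X →L[𝕜] 𝕜, ‖g‖ = 1 ∧ ‖g x‖ = 1 ∧ 1 + ‖f x‖ ≤ ‖g + f‖ := by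
  obtain ⟨c, hc, hcf⟩ := RCLike.exists_norm_eq_mul_self (f x)
  obtain ⟨g, hg, hgx⟩ := exists_dual_vector 𝕜 x (by simp [hx])
  have hc0 : c ≠ 0 := norm_ne_zero_iff.mp (by simp [hc])
  have hgx1 : g x = 1 := by simp [hgx, hx]
  have hsum : (c⁻¹ • g + f) x = c⁻¹ * ((1 + ‖f x‖ : ℝ) : 𝕜) := by
    simp only [add_apply, smul_apply, hgx1, smul_eq_mul,
      RCLike.ofReal_add, RCLike.ofReal_one, hcf]
    field_simp
  refine ⟨c⁻¹ • g, by simp [norm_smul, hc, hg], by simp [hgx1, hc], ?_⟩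
  calc 1 + ‖f x‖ = ‖(c⁻¹ • g + f) x‖ := by
        rw [hsum, norm_mul, norm_inv, hc, RCLike.norm_ofReal, abs_of_nonneg (by positivity)]
        simp
    _ ≤ ‖c⁻¹ • g + f‖ := (c⁻¹ • g + f).unit_le_opNorm x hx.le

theorem lpo_of_reflexive_of_dual_lur_general (𝕜 X : Type*) [RCLike 𝕜] [NormedAddCommGroup X]
    [NormedSpace 𝕜 X]
    (hLUR : ∀ f : X →L[𝕜] 𝕜, ‖f‖ = 1 → ∀ fn : ℕ → X →L[𝕜] 𝕜, (∀ n, ‖fn n‖ = 1) →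
      Filter.Tendsto (fun n => ‖fn n + f‖) Filter.atTop (nhds 2) →
      Filter.Tendsto (fun n => ‖fn n - f‖) Filter.atTop (nhds 0)) :
    HasLpo 𝕜 X 𝕜 := by
  intro ε hε T hT
  by_contra! hfar
  choose x hx hTx hST using fun n : ℕ => hfar (1 / (n + 1)) (by positivity)
  choose S hS hSx hsum using fun n => exists_norming_functional_one_add_norm_le_norm_add T (hx n)
  have hclose : Tendsto (fun n => ‖S n - T‖) atTop (𝓝 0) :=
    LocallyUniformlyRotund.tendsto_norm_sub_of_le hLUR hT hS
      tendsto_one_div_add_atTop_nhds_zero_nat fun n => by linarith [hTx n, hsum n]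
  exact hε.not_ge <| ge_of_tendsto hclose <| .of_forall fun n => hST n (S n) (hS n) (hSx n)

/-- If  is a reflexive Banach space whose dual is locally uniformly rotund,
then the pair  has property . -/
theorem lpo_of_reflexive_of_dual_lur (𝕜 X : Type*) [RCLike 𝕜] [NormedAddCommGroup X]
    [NormedSpace 𝕜 X] [CompleteSpace X]
    (hrefl : Function.Surjective (NormedSpace.inclusionInDoubleDual 𝕜 X))
    (hLUR : ∀ f : X →L[𝕜] 𝕜, ‖f‖ = 1 → ∀ fn : ℕ → X →L[𝕜] 𝕜, (∀ n, ‖fn n‖ = 1) →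
      Filter.Tendsto (fun n => ‖fn n + f‖) Filter.atTop (nhds 2) →
      Filter.Tendsto (fun n => ‖fn n - f‖) Filter.atTop (nhds 0)) :
    HasLpo 𝕜 X 𝕜 :=
  lpo_of_reflexive_of_dual_lur_general 𝕜 X hLUR
end

section
/- If X is a reflexive Banach space and the pair (X, 𝕂) has property L_{p,o}, then X* is strictly convex. -/
/-!
If `‖f + g‖ = 2`, reflexivity gives `x ∈ S_X` with `f x = g x = 1`, so it suffices that
`L_{p,o}` makes `x` a smooth point. Otherwise take `y` with `f y = 0`, `g y = 1` and
`u = x + δ y` for small `δ > 0`. Then `f` almost attains its norm at `u / ‖u‖`, so some `S`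
with `‖S - f‖ < 1 / ‖y‖` attains it there; but `g` forces `‖u‖ ≥ 1 + δ`, whereas
`|S u| ≤ |S x| + δ |(S - f) y| < 1 + δ`.
-/

open Topology

section

variable {𝕜 X : Type*} [RCLike 𝕜] [NormedAddCommGroup X] [NormedSpace 𝕜 X]

lemma eq_one_of_norm_le_one_of_add_eq_two {a b : 𝕜} (ha : ‖a‖ ≤ 1) (hb : ‖b‖ ≤ 1)
    (hab : a + b = 2) : a = 1 := by
  have hsum : ‖a + b‖ = 2 := by rw [hab]; simp
  have hab_norm : ‖a‖ = ‖b‖ := by linarith [norm_add_le a b]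
  have hab_eq : a = b := eq_of_norm_eq_of_norm_add_eq hab_norm (by linarith [norm_add_le a b])
  linear_combination hab / 2 + hab_eq / 2

lemma exists_norm_eq_one_apply_eq_norm
    (hrefl : Function.Surjective (NormedSpace.inclusionInDoubleDual 𝕜 X))
    (φ : X →L[𝕜] 𝕜) (hφ : φ ≠ 0) : ∃ x : X, ‖x‖ = 1 ∧ φ x = ‖φ‖ := by
  obtain ⟨F, hF, hFφ⟩ := exists_dual_vector 𝕜 φ (norm_ne_zero_iff.mpr hφ)
  obtain ⟨x, rfl⟩ := hrefl F
  refine ⟨x, ?_, by rwa [NormedSpace.dual_def] at hFφ⟩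
  rw [← hF]
  exact ((NormedSpace.inclusionInDoubleDualLi 𝕜).norm_map x).symm

lemma LinearMap.exists_apply_eq_zero_apply_eq_one {K M : Type*} [Field K] [AddCommGroup M]
    [Module K M] {f g : M →ₗ[K] K} {x : M} (hfx : f x = 1) (hgx : g x = 1) (hne : f ≠ g) :
    ∃ y : M, f y = 0 ∧ g y = 1 := by
  obtain ⟨z, hz⟩ : ∃ z, f z ≠ g z := by
    by_contra! h
    exact hne (LinearMap.ext h)
  set y := z - f z • x
  have hgy : g y ≠ 0 := by simpa [y, hgx, sub_eq_zero] using hz.symm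
  exact ⟨(g y)⁻¹ • y, by simp [y, hfx], by simp [hgy]⟩

lemma ContinuousLinearMap.norm_apply_add_smul_le {Y : Type*} [NormedAddCommGroup Y]
    [NormedSpace 𝕜 Y] {S f : X →L[𝕜] Y} {x y : X} (hS : ‖S‖ ≤ 1) (hx : ‖x‖ ≤ 1)
    (hfy : f y = 0) (c : 𝕜) : ‖S (x + c • y)‖ ≤ 1 + ‖c‖ * (‖S - f‖ * ‖y‖) := by
  have hSxy : S (x + c • y) = S x + c • (S - f) y := by simp [hfy]
  have hSx : ‖S x‖ ≤ 1 := (S.le_opNorm x).trans (by nlinarith [norm_nonneg x, norm_nonneg S])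
  calc ‖S (x + c • y)‖ ≤ ‖S x‖ + ‖c‖ * ‖(S - f) y‖ := by
        rw [hSxy, ← norm_smul]; exact norm_add_le _ _
    _ ≤ 1 + ‖c‖ * (‖S - f‖ * ‖y‖) := by gcongr; exact (S - f).le_opNorm y

lemma HasLpo.exists_norm_apply_eq_norm {Y : Type*} [NormedAddCommGroup Y] [NormedSpace 𝕜 Y]
    (h : HasLpo 𝕜 X Y) {ε : ℝ} (hε : 0 < ε) {T : X →L[𝕜] Y} (hT : ‖T‖ = 1) :
    ∃ η : ℝ, 0 < η ∧ ∀ u : X, u ≠ 0 → 1 - η < ‖T u‖ / ‖u‖ →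
      ∃ S : X →L[𝕜] Y, ‖S‖ = 1 ∧ ‖S u‖ = ‖u‖ ∧ ‖S - T‖ < ε := by
  obtain ⟨η, hη, H⟩ := h ε hε T hT
  refine ⟨η, hη, fun u hu hTu => ?_⟩
  have hu' : 0 < ‖u‖ := norm_pos_iff.mpr hu
  have hunit : ‖(‖u‖⁻¹ : 𝕜) • u‖ = 1 := by simp [norm_smul, hu'.ne']
  have hscale (A : X →L[𝕜] Y) : ‖A ((‖u‖⁻¹ : 𝕜) • u)‖ = ‖A u‖ / ‖u‖ := by
    simp [norm_smul, div_eq_inv_mul]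
  obtain ⟨S, hS, hSu, hST⟩ := H _ hunit (by rwa [hscale])
  rw [hscale, div_eq_one_iff_eq hu'.ne'] at hSu
  exact ⟨S, hS, hSu, hST⟩

theorem HasLpo.eq_of_apply_eq_one (h : HasLpo 𝕜 X 𝕜) {f g : X →L[𝕜] 𝕜} {x : X}
    (hf : ‖f‖ = 1) (hg : ‖g‖ ≤ 1) (hx : ‖x‖ = 1) (hfx : f x = 1) (hgx : g x = 1) : f = g := by
  by_contra hne
  obtain ⟨y, hfy, hgy⟩ := LinearMap.exists_apply_eq_zero_apply_eq_one (f := f.toLinearMap)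
    (g := g.toLinearMap) hfx hgx (ContinuousLinearMap.coe_injective.ne hne)
  simp only [ContinuousLinearMap.coe_coe] at hfy hgy
  have hy : 0 < ‖y‖ := norm_pos_iff.mpr (by rintro rfl; simp at hgy)
  obtain ⟨η, hη, H⟩ := h.exists_norm_apply_eq_norm (inv_pos.mpr hy) hf
  set u : ℝ → X := fun δ => x + (δ : 𝕜) • y
  obtain ⟨δ, hδη, hδ⟩ : ∃ δ : ℝ, 1 - η < ‖f (u δ)‖ / ‖u δ‖ ∧ 0 < δ := by
    have hcont : ContinuousAt (fun δ => ‖f (u δ)‖ / ‖u δ‖) 0 :=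
      ContinuousAt.div (by fun_prop) (by fun_prop) (by simp [u, hx])
    have hlim : 1 - η < ‖f (u 0)‖ / ‖u 0‖ := by simp [u, hfx, hx, hη]
    exact ((hcont.eventually (lt_mem_nhds hlim)).filter_mono nhdsWithin_le_nhds).and
      self_mem_nhdsWithin |>.exists (f := 𝓝[>] 0)
  have hgu : g (u δ) = 1 + δ := by simp [u, hgx, hgy]
  have hlower : 1 + δ ≤ ‖u δ‖ := by
    have := g.le_opNorm (u δ)
    rw [hgu, ← RCLike.ofReal_one, ← RCLike.ofReal_add, RCLike.norm_ofReal,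
      abs_of_pos (by positivity)] at this
    nlinarith [norm_nonneg (u δ)]
  obtain ⟨S, hS, hSu, hSf⟩ := H (u δ) (norm_pos_iff.mp (by linarith)) hδη
  have hupper := S.norm_apply_add_smul_le hS.le hx.le hfy (δ : 𝕜)
  rw [← show u δ = x + (δ : 𝕜) • y from rfl, hSu, RCLike.norm_ofReal, abs_of_pos hδ] at hupper
  have hSf' : ‖S - f‖ * ‖y‖ < 1 := by rwa [← lt_div_iff₀ hy, one_div]
  nlinarith

end

theorem dual_strictlyConvex_of_lpo_general (𝕜 X : Type*) [RCLike 𝕜] [NormedAddCommGroup X]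
    [NormedSpace 𝕜 X]
    (hrefl : Function.Surjective (NormedSpace.inclusionInDoubleDual 𝕜 X))
    (h : HasLpo 𝕜 X 𝕜) :
    ∀ f g : X →L[𝕜] 𝕜, ‖f‖ = 1 → ‖g‖ = 1 → f ≠ g → ‖f + g‖ / 2 < 1 := by
  intro f g hf hg hne
  by_contra! hfg
  have hnorm : ‖f + g‖ = 2 := le_antisymm (by linarith [norm_add_le f g]) (by linarith)
  obtain ⟨x, hx, hfgx⟩ := exists_norm_eq_one_apply_eq_norm hrefl (f + g)
    (norm_ne_zero_iff.mp (by simp [hnorm]))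
  simp only [hnorm, FunLike.coe_add, Pi.add_apply, RCLike.ofReal_ofNat] at hfgx
  have hfx_le : ‖f x‖ ≤ 1 := by simpa [hf, hx] using f.le_opNorm x
  have hgx_le : ‖g x‖ ≤ 1 := by simpa [hg, hx] using g.le_opNorm x
  have hfx : f x = 1 := eq_one_of_norm_le_one_of_add_eq_two hfx_le hgx_le hfgx
  have hgx : g x = 1 := by linear_combination hfgx - hfx
  exact hne (h.eq_of_apply_eq_one hf hg.le hx hfx hgx)

/-- If  is a reflexive Banach space and  has property ,
then the dual  is strictly convex. -/
theorem dual_strictlyConvex_of_lpo (𝕜 X : Type*) [RCLike 𝕜] [NormedAddCommGroup X]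
    [NormedSpace 𝕜 X] [CompleteSpace X]
    (hrefl : Function.Surjective (NormedSpace.inclusionInDoubleDual 𝕜 X))
    (h : HasLpo 𝕜 X 𝕜) :
    ∀ f g : X →L[𝕜] 𝕜, ‖f‖ = 1 → ‖g‖ = 1 → f ≠ g → ‖f + g‖ / 2 < 1 :=
  dual_strictlyConvex_of_lpo_general 𝕜 X hrefl h
end

section
/- For every n ≥ 2, the pair (ℓ₁ⁿ, 𝕂) fails property L_{o,p}; that is, there exist ε₀ > 0 and a point x ∈ S_{ℓ₁ⁿ} such that for every η > 0 there is a norm-one functional x* with |x*(x)| > 1 − η, yet no x₀ ∈ S_{ℓ₁ⁿ} with ‖x₀ − x‖ < ε₀ satisfies |x*(x₀)| = 1. -/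
/-!
Fix coordinates `i ≠ j` and `x = (eᵢ + eⱼ) / 2` on the unit sphere of `ℓ₁`. For `0 < δ ≤ 1` the
functional `y ↦ yᵢ + (1 - δ) yⱼ` has norm one and takes the value `1 - δ / 2` at `x`. Because its
`j`-th coefficient has modulus `< 1`, it attains its norm only at points with `yⱼ = 0`, and all
of those are at distance at least `1 / 2` from `x`.
-/

open PiLp

section L1

variable {𝕜 ι : Type*} [RCLike 𝕜]

def twoCoordFunctional (i j : ι) (c : 𝕜) : PiLp 1 (fun _ : ι => 𝕜) →L[𝕜] 𝕜 :=
  proj 1 (fun _ => 𝕜) i + c • proj 1 (fun _ => 𝕜) j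

@[simp]
theorem twoCoordFunctional_apply (i j : ι) (c : 𝕜) (y : PiLp 1 (fun _ : ι => 𝕜)) :
    twoCoordFunctional i j c y = y i + c * y j :=
  rfl

theorem norm_twoCoordFunctional_apply_le (i j : ι) (c : 𝕜) (y : PiLp 1 (fun _ : ι => 𝕜)) :
    ‖twoCoordFunctional i j c y‖ ≤ ‖y i‖ + ‖c‖ * ‖y j‖ := by
  simpa [norm_mul] using norm_add_le (y i) (c * y j)

theorem PiLp.single_add_single_apply_left [DecidableEq ι] (p : ENNReal) {i j : ι} (hij : i ≠ j)
    (a b : 𝕜) : (single p i a + single p j b : PiLp p (fun _ : ι => 𝕜)) i = a := by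
  simp [hij.symm]

theorem PiLp.single_add_single_apply_right [DecidableEq ι] (p : ENNReal) {i j : ι} (hij : i ≠ j)
    (a b : 𝕜) : (single p i a + single p j b : PiLp p (fun _ : ι => 𝕜)) j = b := by
  simp [hij]

variable [Fintype ι]

theorem PiLp.norm_apply_add_norm_apply_le_of_L1 {β : ι → Type*}
    [∀ i, SeminormedAddCommGroup (β i)] (y : PiLp 1 β) {i j : ι} (hij : i ≠ j) :
    ‖y i‖ + ‖y j‖ ≤ ‖y‖ := by
  classical
  rw [norm_eq_of_L1, ← Finset.sum_pair hij (f := fun k ↦ ‖y k‖)]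
  exact Finset.sum_le_sum_of_subset_of_nonneg (Finset.subset_univ _) fun k _ _ ↦ norm_nonneg _

theorem PiLp.norm_single_add_single_of_L1 [DecidableEq ι] {i j : ι} (hij : i ≠ j) (a b : 𝕜) :
    ‖(single 1 i a + single 1 j b : PiLp 1 (fun _ : ι => 𝕜))‖ = ‖a‖ + ‖b‖ := by
  refine le_antisymm ((norm_add_le _ _).trans_eq (by simp only [norm_single])) ?_
  have h := norm_apply_add_norm_apply_le_of_L1
    (single 1 i a + single 1 j b : PiLp 1 (fun _ : ι => 𝕜)) hij
  rwa [single_add_single_apply_left 1 hij, single_add_single_apply_right 1 hij] at h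

theorem norm_twoCoordFunctional {i j : ι} (hij : i ≠ j) {c : 𝕜} (hc : ‖c‖ ≤ 1) :
    ‖twoCoordFunctional i j c‖ = 1 := by
  classical
  refine le_antisymm ((twoCoordFunctional i j c).opNorm_le_bound zero_le_one fun y ↦ ?_) ?_
  · calc ‖twoCoordFunctional i j c y‖ ≤ ‖y i‖ + ‖c‖ * ‖y j‖ :=
          norm_twoCoordFunctional_apply_le i j c y
      _ ≤ ‖y i‖ + ‖y j‖ := by gcongr; exact mul_le_of_le_one_left (norm_nonneg _) hc
      _ ≤ 1 * ‖y‖ := by rw [one_mul]; exact norm_apply_add_norm_apply_le_of_L1 y hij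
  · simpa [hij.symm] using (twoCoordFunctional i j c).le_opNorm (single 1 i 1)

theorem apply_eq_zero_of_one_le_norm_twoCoordFunctional_apply {i j : ι} (hij : i ≠ j) {c : 𝕜}
    (hc : ‖c‖ < 1) {y : PiLp 1 (fun _ : ι => 𝕜)} (hy : ‖y‖ ≤ 1)
    (hTy : 1 ≤ ‖twoCoordFunctional i j c y‖) : y j = 0 := by
  have hT := norm_twoCoordFunctional_apply_le i j c y
  have hyij := norm_apply_add_norm_apply_le_of_L1 y hij
  exact norm_le_zero_iff.mp (by nlinarith [norm_nonneg (y j)])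

theorem PiLp.not_hasLop_L1 [Nontrivial ι] : ¬ HasLop 𝕜 (PiLp 1 fun _ : ι => 𝕜) 𝕜 := by
  classical
  obtain ⟨i, j, hij⟩ := exists_pair_ne ι
  set x : PiLp 1 (fun _ : ι => 𝕜) := single 1 i 2⁻¹ + single 1 j 2⁻¹ with hx
  have hxi : x i = 2⁻¹ := single_add_single_apply_left 1 hij _ _
  have hxj : x j = 2⁻¹ := single_add_single_apply_right 1 hij _ _
  intro h
  obtain ⟨η, hη, hT⟩ := h 2⁻¹ (by norm_num) x
    (by rw [hx, norm_single_add_single_of_L1 hij]; norm_num)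
  set δ := min η 1
  have hδ : 0 < δ := lt_min hη one_pos
  have hδη : δ ≤ η := min_le_left η 1
  have hδ1 : δ ≤ 1 := min_le_right η 1
  have hc : ‖((1 - δ : ℝ) : 𝕜)‖ = 1 - δ := by
    rw [RCLike.norm_ofReal, abs_of_nonneg (by linarith)]
  have hTx : twoCoordFunctional i j ((1 - δ : ℝ) : 𝕜) x = ((1 - δ / 2 : ℝ) : 𝕜) := by
    rw [twoCoordFunctional_apply, hxi, hxj]
    push_cast
    ring
  obtain ⟨x₀, hx₀, hTx₀, hx₀x⟩ := hT _ (norm_twoCoordFunctional hij (by linarith))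
    (by rw [hTx, RCLike.norm_ofReal, abs_of_pos (by linarith)]; linarith)
  have hx₀j : x₀ j = 0 :=
    apply_eq_zero_of_one_le_norm_twoCoordFunctional_apply hij (by linarith) hx₀.le hTx₀.ge
  have hfar := norm_apply_le (x₀ - x) j
  rw [PiLp.sub_apply, hx₀j, hxj] at hfar
  norm_num at hfar
  linarith

end L1

/-- For every `n ≥ 2`, the pair `(ℓ₁ⁿ, 𝕜)` fails property `L_{o,p}`. -/
theorem l1n_fails_lop (𝕜 : Type*) [RCLike 𝕜] (n : ℕ) (hn : 2 ≤ n) :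
    ¬ HasLop 𝕜 (PiLp 1 (fun _ : Fin n => 𝕜)) 𝕜 :=
  have : Nontrivial (Fin n) := Fin.nontrivial_iff_two_le.mpr hn
  PiLp.not_hasLop_L1
end

section
/- For every n ≥ 2, the pair (ℓ∞ⁿ, 𝕂) fails property L_{p,o}; that is, there exist ε₀ > 0 and a norm-one functional x* on ℓ∞ⁿ such that for every η > 0 there is x ∈ S_{ℓ∞ⁿ} with |x*(x)| > 1 − η, yet no norm-one functional y* with ‖y* − x*‖ < ε₀ satisfies |y*(x)| = 1. -/

theorem linftyn_fails_lpo' (𝕜 : Type*) [RCLike 𝕜] (n : ℕ) (hn : 2 ≤ n) :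
    ¬ (∀ ε : ℝ, 0 < ε → ∀ T : (Fin n → 𝕜) →L[𝕜] 𝕜, ‖T‖ = 1 →
    ∃ η : ℝ, 0 < η ∧ ∀ x : Fin n → 𝕜, ‖x‖ = 1 → 1 - η < ‖T x‖ →
      ∃ S : (Fin n → 𝕜) →L[𝕜] 𝕜, ‖S‖ = 1 ∧ ‖S x‖ = 1 ∧ ‖S - T‖ < ε) := by
  intro h
  haveI : NeZero n := ⟨by omega⟩
  set i0 : Fin n := ⟨0, by omega⟩ with hi0def
  set i1 : Fin n := ⟨1, by omega⟩ with hi1def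
  have h01 : i0 ≠ i1 := by simp [hi0def, hi1def, Fin.ext_iff]
  set T : (Fin n → 𝕜) →L[𝕜] 𝕜 :=
    (2 : 𝕜)⁻¹ • ((ContinuousLinearMap.proj i0 : (Fin n → 𝕜) →L[𝕜] 𝕜)
      + (ContinuousLinearMap.proj i1 : (Fin n → 𝕜) →L[𝕜] 𝕜)) with hTdef
  have hTapp : ∀ x : Fin n → 𝕜, T x = (2:𝕜)⁻¹ * (x i0 + x i1) := by
    intro x; simp [hTdef, smul_eq_mul]; ring
  clear_value T
  have hhalf : ‖(2:𝕜)⁻¹‖ = 2⁻¹ := by rw [norm_inv]; norm_num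
  have hT : ‖T‖ = 1 := by
    apply le_antisymm
    · apply ContinuousLinearMap.opNorm_le_bound _ zero_le_one
      intro x
      rw [hTapp, one_mul, norm_mul, hhalf]
      have h0 : ‖x i0‖ ≤ ‖x‖ := norm_le_pi_norm x i0
      have h1 : ‖x i1‖ ≤ ‖x‖ := norm_le_pi_norm x i1
      have h2 : ‖x i0 + x i1‖ ≤ ‖x i0‖ + ‖x i1‖ := norm_add_le _ _
      nlinarith [norm_nonneg (x i0 + x i1)]
    · have h1 : ‖(fun _ : Fin n => (1:𝕜))‖ = 1 := by
        simpa using pi_norm_const (1 : 𝕜) (ι := Fin n)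
      have h2 := T.le_opNorm (fun _ => (1:𝕜))
      rw [h1, mul_one, hTapp] at h2
      have h3 : ‖(2:𝕜)⁻¹ * ((1:𝕜) + 1)‖ = 1 := by norm_num
      rw [h3] at h2; exact h2
  obtain ⟨η, hη, hmain⟩ := h (1/2) (by norm_num) T hT
  set t : ℝ := min η 1 with htdef
  have ht0 : 0 < t := lt_min hη one_pos
  have ht1 : t ≤ 1 := min_le_right _ _
  have htη : t ≤ η := min_le_left _ _
  clear_value t
  set x : Fin n → 𝕜 := fun i => if i = i0 then 1 else if i = i1 then ((1 - t : ℝ) : 𝕜) else 0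
    with hxdef
  have hx0 : x i0 = 1 := by simp [hxdef]
  have hx1 : x i1 = ((1 - t : ℝ) : 𝕜) := by simp [hxdef, h01.symm]
  have hxother : ∀ i, i ≠ i0 → i ≠ i1 → x i = 0 := by
    intro i hi hj; simp [hxdef, hi, hj]
  clear_value x
  have hx : ‖x‖ = 1 := by
    apply le_antisymm
    · rw [pi_norm_le_iff_of_nonneg zero_le_one]
      intro i
      by_cases hi : i = i0
      · rw [hi, hx0]; simp
      · by_cases hj : i = i1
        · rw [hj, hx1, RCLike.norm_ofReal, abs_of_nonneg (by linarith)]; linarith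
        · rw [hxother i hi hj]; simp
    · calc (1:ℝ) = ‖x i0‖ := by rw [hx0]; simp
        _ ≤ ‖x‖ := norm_le_pi_norm x i0
  have hTx : ‖T x‖ = 1 - t/2 := by
    rw [hTapp, hx0, hx1, norm_mul, hhalf]
    have : (1 : 𝕜) + ((1 - t : ℝ) : 𝕜) = ((2 - t : ℝ) : 𝕜) := by push_cast; ring
    rw [this, RCLike.norm_ofReal, abs_of_nonneg (by linarith)]
    ring
  obtain ⟨S, hS, hSx, hST⟩ := hmain x hx (by rw [hTx]; linarith)
  -- key step : S e = 0 where e = Pi.single i1 1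
  set e : Fin n → 𝕜 := Pi.single i1 1 with hedef
  have he1 : e i1 = 1 := by simp [hedef]
  have heother : ∀ i, i ≠ i1 → e i = 0 := by
    intro i hi; simp [hedef, Pi.single_apply, hi]
  have he0 : e i0 = 0 := heother i0 h01
  clear_value e
  have he : ‖e‖ = 1 := by
    apply le_antisymm
    · rw [pi_norm_le_iff_of_nonneg zero_le_one]
      intro i
      by_cases hi : i = i1
      · rw [hi, he1]; simp
      · rw [heother i hi]; simp
    · calc (1:ℝ) = ‖e i1‖ := by rw [he1]; simp
        _ ≤ ‖e‖ := norm_le_pi_norm e i1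
  have hSe : S e = 0 := by
    by_contra ha
    set a : 𝕜 := S e with hadef
    have hapos : 0 < ‖a‖ := norm_pos_iff.mpr ha
    have hane : ((‖a‖ : ℝ) : 𝕜) ≠ 0 := by
      exact_mod_cast RCLike.ofReal_ne_zero.mpr (ne_of_gt hapos)
    set u : 𝕜 := S x with hudef
    set c : 𝕜 := ((t / ‖a‖ : ℝ) : 𝕜) * u * (starRingEnd 𝕜 a) with hcdef
    clear_value a u c
    have hcnorm : ‖c‖ = t := by
      rw [hcdef, norm_mul, norm_mul, RCLike.norm_ofReal, RCLike.norm_conj, hSx]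
      rw [abs_of_nonneg (by positivity)]
      field_simp
    have hca : c * a = ((t * ‖a‖ : ℝ) : 𝕜) * u := by
      rw [hcdef]
      have hconj : (starRingEnd 𝕜 a) * a = ((‖a‖^2 : ℝ) : 𝕜) := by
        rw [RCLike.conj_mul]; norm_cast
      calc ((t / ‖a‖ : ℝ) : 𝕜) * u * (starRingEnd 𝕜 a) * a
          = ((t / ‖a‖ : ℝ) : 𝕜) * u * ((starRingEnd 𝕜 a) * a) := by ring
        _ = ((t / ‖a‖ : ℝ) : 𝕜) * u * ((‖a‖^2 : ℝ) : 𝕜) := by rw [hconj]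
        _ = ((t * ‖a‖ : ℝ) : 𝕜) * u := by
            push_cast
            field_simp
    have hy : ‖x + c • e‖ ≤ 1 := by
      rw [pi_norm_le_iff_of_nonneg zero_le_one]
      intro i
      have happ : (x + c • e) i = x i + c * e i := by simp [smul_eq_mul]
      rw [happ]
      by_cases hi : i = i0
      · rw [hi, hx0, he0, mul_zero, add_zero]; simp
      · by_cases hj : i = i1
        · rw [hj, hx1, he1, mul_one]
          calc ‖((1 - t : ℝ) : 𝕜) + c‖ ≤ ‖((1 - t : ℝ) : 𝕜)‖ + ‖c‖ := norm_add_le _ _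
            _ = (1 - t) + t := by
                rw [hcnorm, RCLike.norm_ofReal, abs_of_nonneg (by linarith)]
            _ = 1 := by ring
        · rw [hxother i hi hj, heother i hj, mul_zero, add_zero]; simp
    have hSy : S (x + c • e) = ((1 + t * ‖a‖ : ℝ) : 𝕜) * u := by
      rw [map_add, map_smul, smul_eq_mul, ← hudef, ← hadef, hca]
      push_cast; ring
    have h1 : ‖S (x + c • e)‖ = 1 + t * ‖a‖ := by
      rw [hSy, norm_mul, RCLike.norm_ofReal, hSx, mul_one,
        abs_of_nonneg (by positivity)]
    have h2 := S.le_opNorm (x + c • e)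
    rw [h1, hS, one_mul] at h2
    have h5 : 1 + t * ‖a‖ ≤ 1 := le_trans h2 hy
    linarith [mul_pos ht0 hapos]
  -- contradiction
  have hTe : T e = (2:𝕜)⁻¹ := by
    rw [hTapp, he0, he1]; ring
  have hkey : (1:ℝ)/2 ≤ ‖S - T‖ := by
    have h2 := (S - T).le_opNorm e
    rw [he, mul_one] at h2
    have h4 : (S - T) e = -(2:𝕜)⁻¹ := by
      rw [ContinuousLinearMap.sub_apply, hSe, hTe]; ring
    rw [h4] at h2
    have h3 : ‖-(2:𝕜)⁻¹‖ = 1/2 := by rw [norm_neg, hhalf]; norm_num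
    rw [h3] at h2; exact h2
  linarith

/-- For every `n ≥ 2`, the pair `(ℓ∞ⁿ, 𝕜)` fails property `L_{p,o}`.
Here `ℓ∞ⁿ` is `Fin n → 𝕜` with the sup norm. -/
theorem linftyn_fails_lpo (𝕜 : Type*) [RCLike 𝕜] (n : ℕ) (hn : 2 ≤ n) :
    ¬ HasLpo 𝕜 (Fin n → 𝕜) 𝕜 :=
  linftyn_fails_lpo' 𝕜 n hn
end

section
/- Let X be a 2-dimensional Banach space. Then the pair (X, X) fails property L_{o,p} for bounded linear operators. -/
/-- If `X` is a 2-dimensional Banach space, then the pair `(X, X)` fails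
property `L_{o,p}`. -/
theorem twoDim_fails_lop_self (𝕜 X : Type*) [RCLike 𝕜] [NormedAddCommGroup X]
    [NormedSpace 𝕜 X] [CompleteSpace X] (hdim : Module.finrank 𝕜 X = 2) :
    ¬ HasLop 𝕜 X X := by
  intro h
  -- X is nontrivial
  have hnt : Nontrivial X := by
    apply Module.nontrivial_of_finrank_pos (R := 𝕜); omega
  obtain ⟨u, hu⟩ := exists_ne (0 : X)
  -- unit vector v₂
  set v₂ : X := (‖u‖⁻¹ : 𝕜) • u with hv₂def
  have hu0 : (0:ℝ) < ‖u‖ := norm_pos_iff.mpr hu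
  have hv₂ : ‖v₂‖ = 1 := by
    rw [hv₂def, norm_smul, norm_inv, RCLike.norm_ofReal, abs_norm, inv_mul_cancel₀ hu0.ne']
  -- supporting functional g
  obtain ⟨g, hg, hgv₂⟩ := exists_dual_vector 𝕜 v₂ (by intro h0; rw [h0] at hv₂; simp at hv₂)
  have hgv₂1 : g v₂ = 1 := by rw [hgv₂, hv₂]; norm_num
  -- a nonzero vector in ker g
  have hninj : ¬ Function.Injective g := by
    intro hinj
    have h1 := LinearMap.finrank_le_finrank_of_injective (f := (g : X →ₗ[𝕜] 𝕜)) hinj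
    rw [hdim, Module.finrank_self] at h1
    omega
  rw [Function.not_injective_iff] at hninj
  obtain ⟨a, b, hab, hne⟩ := hninj
  have hw : a - b ≠ 0 := sub_ne_zero_of_ne hne
  set v₁ : X := (‖a - b‖⁻¹ : 𝕜) • (a - b) with hv₁def
  have hw0 : (0:ℝ) < ‖a - b‖ := norm_pos_iff.mpr hw
  have hv₁ : ‖v₁‖ = 1 := by
    rw [hv₁def, norm_smul, norm_inv, RCLike.norm_ofReal, abs_norm, inv_mul_cancel₀ hw0.ne']
  have hgv₁ : g v₁ = 0 := by
    rw [hv₁def, map_smul, map_sub, hab, sub_self, smul_zero]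
  -- apply the property with ε = 1/2, x = v₁
  obtain ⟨η, hη, H⟩ := h (1/2) (by norm_num) v₁ hv₁
  set c : ℝ := max (1 - η/2) (1/2) with hcdef
  have hc1 : c < 1 := by
    apply max_lt <;> [linarith; norm_num]
  have hc0 : (0:ℝ) < c := lt_of_lt_of_le (by norm_num) (le_max_right _ _)
  have hcη : 1 - η < c := lt_of_lt_of_le (by linarith) (le_max_left _ _)
  set T : X →L[𝕜] X := (c : 𝕜) • ContinuousLinearMap.id 𝕜 X
      + ((1 - c : ℝ) : 𝕜) • g.smulRight v₂ with hTdef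
  have hTapp : ∀ x : X, T x = (c : 𝕜) • x + ((1 - c : ℝ) : 𝕜) • (g x • v₂) := by
    intro x
    simp [hTdef]
  have hTbound : ∀ x : X, ‖T x‖ ≤ ‖x‖ := by
    intro x
    rw [hTapp]
    calc ‖(c : 𝕜) • x + ((1 - c : ℝ) : 𝕜) • (g x • v₂)‖
        ≤ ‖(c : 𝕜) • x‖ + ‖((1 - c : ℝ) : 𝕜) • (g x • v₂)‖ := norm_add_le _ _
      _ = c * ‖x‖ + (1 - c) * (‖g x‖ * ‖v₂‖) := by
          rw [norm_smul, norm_smul, norm_smul, RCLike.norm_ofReal, RCLike.norm_ofReal,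
            abs_of_pos hc0, abs_of_pos (by linarith : (0:ℝ) < 1 - c)]
      _ ≤ c * ‖x‖ + (1 - c) * ‖x‖ := by
          have : ‖g x‖ ≤ ‖x‖ := by
            calc ‖g x‖ ≤ ‖g‖ * ‖x‖ := g.le_opNorm x
              _ = ‖x‖ := by rw [hg, one_mul]
          rw [hv₂, mul_one]
          nlinarith [norm_nonneg x]
      _ = ‖x‖ := by ring
  have hTv₂ : T v₂ = v₂ := by
    rw [hTapp, hgv₂1, one_smul, ← add_smul]
    norm_num
  have hTnorm : ‖T‖ = 1 := by
    apply le_antisymm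
    · exact T.opNorm_le_bound (by norm_num) (fun x => by simpa using hTbound x)
    · calc (1:ℝ) = ‖T v₂‖ := by rw [hTv₂, hv₂]
        _ ≤ ‖T‖ * ‖v₂‖ := T.le_opNorm v₂
        _ = ‖T‖ := by rw [hv₂, mul_one]
  have hTv₁ : ‖T v₁‖ = c := by
    rw [hTapp, hgv₁, zero_smul, smul_zero, add_zero, norm_smul, RCLike.norm_ofReal,
      abs_of_pos hc0, hv₁, mul_one]
  obtain ⟨x₀, hx₀, hTx₀, hclose⟩ := H T hTnorm (by rw [hTv₁]; exact hcη)
  -- |g x₀| < 1/2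
  have hgx₀ : ‖g x₀‖ < 1/2 := by
    calc ‖g x₀‖ = ‖g (x₀ - v₁)‖ := by rw [map_sub, hgv₁, sub_zero]
      _ ≤ ‖g‖ * ‖x₀ - v₁‖ := g.le_opNorm _
      _ = ‖x₀ - v₁‖ := by rw [hg, one_mul]
      _ < 1/2 := hclose
  -- but ‖T x₀‖ = 1 forces ‖g x₀‖ ≥ 1
  have : (1:ℝ) ≤ c * 1 + (1 - c) * ‖g x₀‖ := by
    calc (1:ℝ) = ‖T x₀‖ := hTx₀.symm
      _ ≤ ‖(c : 𝕜) • x₀‖ + ‖((1 - c : ℝ) : 𝕜) • (g x₀ • v₂)‖ := by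
          rw [hTapp]; exact norm_add_le _ _
      _ = c * ‖x₀‖ + (1 - c) * (‖g x₀‖ * ‖v₂‖) := by
          rw [norm_smul, norm_smul, norm_smul, RCLike.norm_ofReal, RCLike.norm_ofReal,
            abs_of_pos hc0, abs_of_pos (by linarith : (0:ℝ) < 1 - c)]
      _ = c * 1 + (1 - c) * ‖g x₀‖ := by rw [hx₀, hv₂]; ring
  nlinarith
end

section
/- Let X be a Banach space with dim(X) ≥ 2. Then the pair (X, ℓ∞²) fails property L_{o,p}. -/
/-!
Take `x ∈ S_X`, a norming functional `f₁` (`‖f₁‖ = f₁ x = 1`) and, using `dim X ≥ 2`, a norm-one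
`f₂` with `f₂ x = 0`. For `a < 1` the operator `T = (a f₁, f₂) : X → ℓ∞²` has norm `1` and
`‖T x‖ = a`, as close to `1` as we like. But `f₂ x₀ = f₂ (x₀ - x)`, so on the unit ball
`‖T x₀‖ ≤ max a ‖x₀ - x‖`: `T` attains its norm only at points at distance `≥ 1` from `x`.
-/

namespace SeparatingDual

variable {R V : Type*} [Field R] [TopologicalSpace R] [IsTopologicalRing R] [AddCommGroup V]
  [TopologicalSpace V] [Module R V] [SeparatingDual R V]

theorem exists_ne_zero_apply_eq_zero (h : 1 < Module.rank R V) {x : V} (hx : x ≠ 0) :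
    ∃ f : StrongDual R V, f ≠ 0 ∧ f x = 0 := by
  obtain ⟨f₁, hf₁x⟩ := exists_eq_one (R := R) hx
  obtain ⟨y, hxy⟩ := exists_linearIndependent_pair_of_one_lt_rank h hx
  set z := y - f₁ y • x
  have hz : z ≠ 0 := fun hz ↦ by
    simpa using (LinearIndependent.pair_iff.mp hxy (-f₁ y) 1 (by rw [← hz]; module)).2
  have hf₁z : f₁ z = 0 := by simp [z, hf₁x]
  obtain ⟨g, hgz⟩ := exists_eq_one (R := R) hz
  refine ⟨g - g x • f₁, fun h0 ↦ ?_, by simp [hf₁x]⟩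
  simpa [hgz, hf₁z] using congr($h0 z)

end SeparatingDual

theorem Pi.norm_fin_two {E : Type*} [SeminormedAddCommGroup E] (v : Fin 2 → E) :
    ‖v‖ = max ‖v 0‖ ‖v 1‖ :=
  le_antisymm ((pi_norm_le_iff_of_nonneg (by positivity)).mpr (Fin.forall_fin_two.mpr
      ⟨le_max_left _ _, le_max_right _ _⟩))
    (max_le (norm_le_pi_norm v 0) (norm_le_pi_norm v 1))

namespace ContinuousLinearMap

variable {𝕜 E : Type*} [NontriviallyNormedField 𝕜] [SeminormedAddCommGroup E] [NormedSpace 𝕜 E]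

theorem norm_pi {ι : Type*} [Fintype ι] {M : ι → Type*} [∀ i, SeminormedAddCommGroup (M i)]
    [∀ i, NormedSpace 𝕜 (M i)] (L : (i : ι) → E →L[𝕜] M i) : ‖pi L‖ = ‖L‖ := by
  refine le_antisymm (norm_pi_le_of_le (norm_le_pi_norm L) (norm_nonneg L))
    ((pi_norm_le_iff_of_nonneg (norm_nonneg _)).mpr fun i ↦ ?_)
  exact opNorm_le_bound _ (norm_nonneg _) fun x ↦
    (norm_le_pi_norm (pi L x) i).trans ((pi L).le_opNorm x)

end ContinuousLinearMap

section PairMap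

variable {𝕜 X : Type*} [RCLike 𝕜] [NormedAddCommGroup X] [NormedSpace 𝕜 X]

/-- The paper's `Tₙ` is `pairMap (1 - 1/n) x₁* x₂*`. -/
def pairMap (c : 𝕜) (f₁ f₂ : StrongDual 𝕜 X) : X →L[𝕜] Fin 2 → 𝕜 :=
  ContinuousLinearMap.pi ![c • f₁, f₂]

theorem norm_pairMap (c : 𝕜) (f₁ f₂ : StrongDual 𝕜 X) :
    ‖pairMap c f₁ f₂‖ = max (‖c‖ * ‖f₁‖) ‖f₂‖ := by
  simp [pairMap, ContinuousLinearMap.norm_pi, Pi.norm_fin_two, norm_smul]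

theorem norm_pairMap_apply (c : 𝕜) (f₁ f₂ : StrongDual 𝕜 X) (x : X) :
    ‖pairMap c f₁ f₂ x‖ = max (‖c‖ * ‖f₁ x‖) ‖f₂ x‖ := by
  simp [pairMap, Pi.norm_fin_two]

theorem norm_pairMap_apply_le {c : 𝕜} {f₁ f₂ : StrongDual 𝕜 X} (hf₁ : ‖f₁‖ ≤ 1) (hf₂ : ‖f₂‖ ≤ 1)
    {x x₀ : X} (hf₂x : f₂ x = 0) (hx₀ : ‖x₀‖ ≤ 1) :
    ‖pairMap c f₁ f₂ x₀‖ ≤ max ‖c‖ ‖x₀ - x‖ := by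
  rw [norm_pairMap_apply]
  refine max_le_max ?_ ?_
  · exact mul_le_of_le_one_right (norm_nonneg c) ((f₁.le_of_opNorm_le hf₁ x₀).trans (by simpa))
  · calc ‖f₂ x₀‖ = ‖f₂ (x₀ - x)‖ := by rw [map_sub, hf₂x, sub_zero]
      _ ≤ ‖x₀ - x‖ := by simpa using f₂.le_of_opNorm_le hf₂ (x₀ - x)

end PairMap

theorem fails_lop_linfty2_general (𝕜 X : Type*) [RCLike 𝕜] [NormedAddCommGroup X]
    [NormedSpace 𝕜 X] (hdim : 2 ≤ Module.rank 𝕜 X) :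
    ¬ HasLop 𝕜 X (Fin 2 → 𝕜) := by
  intro hLop
  have hrank : 1 < Module.rank 𝕜 X := lt_of_lt_of_le (by norm_num) hdim
  have : Nontrivial X := rank_pos_iff_nontrivial.mp (zero_lt_one.trans hrank)
  obtain ⟨v, hv⟩ := exists_ne (0 : X)
  set x := ((‖v‖ : 𝕜))⁻¹ • v
  have hx : ‖x‖ = 1 := norm_smul_inv_norm hv
  have hx_ne : x ≠ 0 := norm_ne_zero_iff.mp (by simp [hx])
  obtain ⟨f₁, hf₁, hf₁x⟩ := exists_dual_vector 𝕜 x (by simp [hx])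
  obtain ⟨f, hf, hfx⟩ := SeparatingDual.exists_ne_zero_apply_eq_zero hrank hx_ne
  set f₂ := ((‖f‖ : 𝕜))⁻¹ • f
  have hf₂ : ‖f₂‖ = 1 := norm_smul_inv_norm hf
  have hf₂x : f₂ x = 0 := by simp [f₂, hfx]
  obtain ⟨η, hη, hT⟩ := hLop 1 one_pos x hx
  obtain ⟨a, ha, ha₁⟩ := exists_between (max_lt one_pos (by linarith) : max 0 (1 - η) < 1)
  have ha₀ : 0 < a := (le_max_left _ _).trans_lt ha
  have hna : ‖(a : 𝕜)‖ = a := by simp [ha₀.le]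
  set T := pairMap (a : 𝕜) f₁ f₂
  have hT₁ : ‖T‖ = 1 := by simp [T, norm_pairMap, hna, hf₁, hf₂, ha₁.le]
  have hTx : ‖T x‖ = a := by simp [T, norm_pairMap_apply, hna, hf₁x, hx, hf₂x, ha₀.le]
  obtain ⟨x₀, hx₀, hTx₀, hdist⟩ := hT T hT₁ (hTx ▸ (le_max_right _ _).trans_lt ha)
  have hTx₀_le := norm_pairMap_apply_le hf₁.le hf₂.le hf₂x hx₀.le (c := (a : 𝕜))
  rw [hTx₀, hna] at hTx₀_le
  exact (max_lt ha₁ hdist).not_ge hTx₀_le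

/-- If `X` is a Banach space with `dim X ≥ 2`, then the pair `(X, ℓ∞²)` fails
property `L_{o,p}`. Here `ℓ∞²` is `Fin 2 → 𝕜` with the sup norm. -/
theorem fails_lop_linfty2 (𝕜 X : Type*) [RCLike 𝕜] [NormedAddCommGroup X]
    [NormedSpace 𝕜 X] [CompleteSpace X] (hdim : 2 ≤ Module.rank 𝕜 X) :
    ¬ HasLop 𝕜 X (Fin 2 → 𝕜) :=
  fails_lop_linfty2_general 𝕜 X hdim
end

section
/- Let X and Y be Banach spaces such that (X, 𝕂) has property L_{p,o} and Y has property β of Lindenstrauss with a finite index set I and constant ρ ∈ [0, 1). Then the pair (X, Y) has property L_{p,o}. -/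
set_option maxHeartbeats 1000000

private lemma norm_ofReal_smul {𝕜 E : Type*} [RCLike 𝕜] [SeminormedAddCommGroup E]
    [NormedSpace 𝕜 E] (a : ℝ) (v : E) : ‖(↑a : 𝕜) • v‖ = |a| * ‖v‖ :=
  (norm_smul _ v).trans (by rw [RCLike.norm_ofReal])



/-- If `(X, 𝕜)` has property `L_{p,o}` and `Y` has property β of
Lindenstrauss with a finite index set `I` and constant `ρ ∈ [0, 1)`, then `(X, Y)` has
property `L_{p,o}`. -/
theorem lpo_of_propBeta_finite (𝕜 X Y I : Type*) [RCLike 𝕜] [NormedAddCommGroup X]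
    [NormedSpace 𝕜 X] [CompleteSpace X] [NormedAddCommGroup Y] [NormedSpace 𝕜 Y]
    [CompleteSpace Y] [Finite I]
    (y : I → Y) (g : I → (Y →L[𝕜] 𝕜)) (ρ : ℝ) (hρ0 : 0 ≤ ρ) (hρ1 : ρ < 1)
    (hy : ∀ i, ‖y i‖ = 1) (hg : ∀ i, ‖g i‖ = 1)
    (hgy : ∀ i, g i (y i) = 1)
    (hcross : ∀ i j, i ≠ j → ‖g i (y j)‖ ≤ ρ)
    (hnorm : ∀ z : Y, ‖z‖ = ⨆ i, ‖g i z‖)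
    (h : HasLpo 𝕜 X 𝕜) :
    HasLpo 𝕜 X Y := by
  intro ε hε T hT
  rcases isEmpty_or_nonempty I with hI | hI
  · refine ⟨1, one_pos, fun x hx hTx => absurd hTx ?_⟩
    have h0 : ‖T x‖ = 0 := by rw [hnorm (T x), Real.iSup_of_isEmpty]
    rw [h0]; push_neg; norm_num
  · have _ : Fintype I := Fintype.ofFinite I
    classical
    set ε₀ : ℝ := min ε 1 with hε₀def
    have hε₀ : 0 < ε₀ := lt_min hε one_pos
    have hε₀le : ε₀ ≤ ε := min_le_left _ _
    have hε₀le1 : ε₀ ≤ 1 := min_le_right _ _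
    have h1ρ : 0 < 1 - ρ := by linarith
    set δ : ℝ := ε₀ * (1 - ρ) / 20 with hδdef
    have hδ : 0 < δ := by positivity
    have hδ1 : δ ≤ 1 / 20 := by nlinarith
    set f : I → (X →L[𝕜] 𝕜) := fun i => (g i).comp T with hfdef
    have hfle : ∀ i, ‖f i‖ ≤ 1 := fun i => by
      calc ‖f i‖ ≤ ‖g i‖ * ‖T‖ := ContinuousLinearMap.opNorm_comp_le _ _
      _ = 1 := by rw [hg i, hT, one_mul]
    have normφ : ∀ i, 1 - δ < ‖f i‖ → ‖((↑(‖f i‖⁻¹) : 𝕜) • f i)‖ = 1 := by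
      intro i hi
      have hpos : 0 < ‖f i‖ := by linarith
      rw [norm_ofReal_smul (‖f i‖⁻¹) (f i), abs_inv, abs_of_pos hpos,
        inv_mul_cancel₀ hpos.ne']
    set ηf : I → ℝ := fun i =>
      if h' : 1 - δ < ‖f i‖ then (h δ hδ _ (normφ i h')).choose else 1 with hηfdef
    have hηf_pos : ∀ i, 0 < ηf i := by
      intro i
      rw [hηfdef]
      dsimp only
      split
      · exact (h δ hδ _ (normφ i ‹_›)).choose_spec.1
      · exact one_pos
    have hne : (Finset.univ : Finset I).Nonempty := Finset.univ_nonempty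
    refine ⟨min δ (Finset.univ.inf' hne ηf),
      lt_min hδ ((Finset.lt_inf'_iff hne).mpr fun i _ => hηf_pos i), ?_⟩
    set η := min δ (Finset.univ.inf' hne ηf) with hηdef
    intro x hx hTx
    obtain ⟨i, hi⟩ := Finite.exists_max fun i => ‖g i (T x)‖
    have hTxle : ‖T x‖ ≤ ‖g i (T x)‖ := by
      rw [hnorm (T x)]; exact ciSup_le hi
    have hηδ : η ≤ δ := min_le_left _ _
    have hηi : η ≤ ηf i := le_trans (min_le_right _ _) (Finset.inf'_le _ (Finset.mem_univ i))
    have hgiTx : 1 - η < ‖g i (T x)‖ := lt_of_lt_of_le hTx hTxle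
    have hfxval : ∀ z : X, f i z = g i (T z) := fun z => rfl
    have hfixnorm : ‖f i x‖ = ‖g i (T x)‖ := rfl
    have hfixle : ‖f i x‖ ≤ ‖f i‖ := by
      calc ‖f i x‖ ≤ ‖f i‖ * ‖x‖ := (f i).le_opNorm x
      _ = ‖f i‖ := by rw [hx, mul_one]
    have hfi : 1 - δ < ‖f i‖ := by rw [hfixnorm] at hfixle; linarith
    have hfpos : 0 < ‖f i‖ := by linarith
    have hfinv : 1 ≤ ‖f i‖⁻¹ := (one_le_inv₀ hfpos).mpr (hfle i)
    set φ : X →L[𝕜] 𝕜 := (↑(‖f i‖⁻¹) : 𝕜) • f i with hφdef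
    obtain ⟨hpos', hspec⟩ := (h δ hδ _ (normφ i hfi)).choose_spec
    have hφx : 1 - (h δ hδ _ (normφ i hfi)).choose < ‖φ x‖ := by
      have h1 : ‖φ x‖ = ‖f i‖⁻¹ * ‖f i x‖ := by
        rw [hφdef, ContinuousLinearMap.smul_apply, norm_ofReal_smul (‖f i‖⁻¹) (f i x),
          abs_inv, abs_of_pos hfpos]
      have h2 : ‖f i x‖ ≤ ‖φ x‖ := by
        have h2a : 1 * ‖f i x‖ ≤ ‖f i‖⁻¹ * ‖f i x‖ :=
          mul_le_mul_of_nonneg_right hfinv (norm_nonneg (f i x))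
        rw [h1]; linarith
      have h3 : ηf i = (h δ hδ _ (normφ i hfi)).choose := dif_pos hfi
      rw [← h3]
      rw [hfixnorm] at h2
      linarith
    obtain ⟨ψ, hψ1, hψx, hψφ⟩ := hspec x hx hφx
    -- the perturbation
    set r : ℝ := 3 * ρ * ε₀ / 20 with hrdef
    have hr0 : 0 ≤ r := by positivity
    have hr1 : r ≤ 1 := by
      have h6 : ρ * ε₀ ≤ 1 * 1 := mul_le_mul hρ1.le hε₀le1 hε₀.le zero_le_one
      rw [hrdef]; linarith
    have h1r : (0:ℝ) < 1 + r := by linarith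
    have hkey : ρ * (3 * δ + r) = r := by rw [hδdef, hrdef]; ring
    set K : X →L[𝕜] 𝕜 := (↑(1 + r) : 𝕜) • ψ - f i with hKdef
    have hK : ‖K‖ ≤ 3 * δ + r := by
      have e1 : K = (↑(1 + r) : 𝕜) • (ψ - φ) + (↑((1 + r) * ‖f i‖⁻¹ - 1) : 𝕜) • f i := by
        rw [hKdef, hφdef]
        ext z
        simp only [ContinuousLinearMap.add_apply, ContinuousLinearMap.sub_apply,
          ContinuousLinearMap.smul_apply, smul_eq_mul]
        push_cast
        ring
      have n1 : ‖(↑(1 + r) : 𝕜) • (ψ - φ)‖ ≤ (1 + r) * δ := by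
        rw [norm_ofReal_smul (1 + r) (ψ - φ), abs_of_pos h1r]
        exact mul_le_mul_of_nonneg_left hψφ.le h1r.le
      have n2 : ‖(↑((1 + r) * ‖f i‖⁻¹ - 1) : 𝕜) • f i‖ ≤ r + δ := by
        rw [norm_ofReal_smul ((1 + r) * ‖f i‖⁻¹ - 1) (f i)]
        have hge : (0:ℝ) ≤ (1 + r) * ‖f i‖⁻¹ - 1 := by
          have h7 : 1 * 1 ≤ (1 + r) * ‖f i‖⁻¹ :=
            mul_le_mul (by linarith) hfinv zero_le_one h1r.le
          linarith
        rw [abs_of_nonneg hge]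
        have : ((1 + r) * ‖f i‖⁻¹ - 1) * ‖f i‖ = (1 + r) * (‖f i‖⁻¹ * ‖f i‖) - ‖f i‖ := by
          ring
        rw [this, inv_mul_cancel₀ hfpos.ne', mul_one]
        linarith
      have tri := norm_add_le ((↑(1 + r) : 𝕜) • (ψ - φ)) ((↑((1 + r) * ‖f i‖⁻¹ - 1) : 𝕜) • f i)
      rw [← e1] at tri
      have hrδ : r * δ ≤ 1 * δ := mul_le_mul_of_nonneg_right hr1 hδ.le
      linarith
    set S₀ : X →L[𝕜] Y := T + K.smulRight (y i) with hS₀def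
    have hgj : ∀ (z : X) (j : I), g j (S₀ z) = g j (T z) + K z * g j (y i) := by
      intro z j
      rw [hS₀def]
      simp [ContinuousLinearMap.smulRight_apply, smul_eq_mul, mul_comm]
    have hgiz : ∀ z : X, g i (S₀ z) = (↑(1 + r) : 𝕜) * ψ z := by
      intro z
      rw [hgj z i, hgy i, mul_one, hKdef]
      simp only [ContinuousLinearMap.sub_apply, ContinuousLinearMap.smul_apply, smul_eq_mul]
      have : f i z = g i (T z) := rfl
      rw [this]; ring
    have hnormc : ‖(↑(1 + r) : 𝕜)‖ = 1 + r := by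
      rw [RCLike.norm_ofReal, abs_of_pos h1r]
    have hS₀le : ‖S₀‖ ≤ 1 + r := by
      refine ContinuousLinearMap.opNorm_le_bound _ h1r.le fun z => ?_
      rw [hnorm (S₀ z)]
      refine ciSup_le fun j => ?_
      by_cases hji : j = i
      · subst hji
        rw [hgiz z, norm_mul, hnormc]
        have : ‖ψ z‖ ≤ ‖z‖ := by
          calc ‖ψ z‖ ≤ ‖ψ‖ * ‖z‖ := ψ.le_opNorm z
          _ = ‖z‖ := by rw [hψ1, one_mul]
        exact mul_le_mul_of_nonneg_left this h1r.le
      · rw [hgj z j]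
        have b1 : ‖g j (T z)‖ ≤ ‖z‖ := by
          calc ‖g j (T z)‖ ≤ ‖g j‖ * ‖T z‖ := (g j).le_opNorm _
          _ = ‖T z‖ := by rw [hg j, one_mul]
          _ ≤ ‖T‖ * ‖z‖ := T.le_opNorm z
          _ = ‖z‖ := by rw [hT, one_mul]
        have b2 : ‖K z‖ ≤ ‖K‖ * ‖z‖ := K.le_opNorm z
        have b3 : ‖g j (y i)‖ ≤ ρ := hcross j i hji
        have hρK : ρ * ‖K‖ ≤ r := (mul_le_mul_of_nonneg_left hK hρ0).trans_eq hkey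
        calc ‖g j (T z) + K z * g j (y i)‖ ≤ ‖g j (T z)‖ + ‖K z‖ * ‖g j (y i)‖ := by
              refine (norm_add_le _ _).trans ?_
              rw [norm_mul]
        _ ≤ ‖z‖ + (‖K‖ * ‖z‖) * ρ := by
              refine add_le_add b1 ?_
              exact mul_le_mul b2 b3 (norm_nonneg _) (by positivity)
        _ ≤ (1 + r) * ‖z‖ := by
              have h8 : (ρ * ‖K‖) * ‖z‖ ≤ r * ‖z‖ :=
                mul_le_mul_of_nonneg_right hρK (norm_nonneg z)
              ring_nf
              ring_nf at h8
              linarith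
    have hgix : ‖g i (S₀ x)‖ = 1 + r := by
      rw [hgiz x, norm_mul, hnormc, hψx, mul_one]
    have hS₀x : ‖S₀ x‖ = 1 + r := by
      refine le_antisymm ?_ ?_
      · calc ‖S₀ x‖ ≤ ‖S₀‖ * ‖x‖ := S₀.le_opNorm x
        _ = ‖S₀‖ := by rw [hx, mul_one]
        _ ≤ 1 + r := hS₀le
      · calc 1 + r = ‖g i (S₀ x)‖ := hgix.symm
        _ ≤ ‖g i‖ * ‖S₀ x‖ := (g i).le_opNorm _
        _ = ‖S₀ x‖ := by rw [hg i, one_mul]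
    have hS₀ : ‖S₀‖ = 1 + r := by
      refine le_antisymm hS₀le ?_
      calc 1 + r = ‖S₀ x‖ := hS₀x.symm
      _ ≤ ‖S₀‖ * ‖x‖ := S₀.le_opNorm x
      _ = ‖S₀‖ := by rw [hx, mul_one]
    have hinv : ‖(↑(1 + r)⁻¹ : 𝕜)‖ = (1 + r)⁻¹ := by
      rw [RCLike.norm_ofReal, abs_of_pos (inv_pos.mpr h1r)]
    refine ⟨(↑(1 + r)⁻¹ : 𝕜) • S₀, ?_, ?_, ?_⟩
    · rw [norm_ofReal_smul ((1 + r)⁻¹) S₀, abs_of_pos (inv_pos.mpr h1r), hS₀, inv_mul_cancel₀ h1r.ne']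
    · rw [ContinuousLinearMap.smul_apply, norm_ofReal_smul ((1 + r)⁻¹) (S₀ x),
        abs_of_pos (inv_pos.mpr h1r), hS₀x, inv_mul_cancel₀ h1r.ne']
    · have e2 : (↑(1 + r)⁻¹ : 𝕜) • S₀ - T
          = (↑(1 + r)⁻¹ : 𝕜) • K.smulRight (y i) + (↑((1 + r)⁻¹ - 1) : 𝕜) • T := by
        rw [hS₀def]
        ext z
        simp only [ContinuousLinearMap.add_apply, ContinuousLinearMap.sub_apply,
          ContinuousLinearMap.smul_apply]
        push_cast
        rw [smul_add]
        module
      have hRnorm : ‖K.smulRight (y i)‖ = ‖K‖ := by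
        rw [ContinuousLinearMap.norm_smulRight_apply, hy i, mul_one]
      have hinvle : (1 + r)⁻¹ ≤ 1 := by
        rw [inv_eq_one_div, div_le_one h1r]; linarith
      have hinvge : 1 - r ≤ (1 + r)⁻¹ := by
        have h9 : (1 - r) * (1 + r) = 1 - r * r := by ring
        rw [inv_eq_one_div, le_div_iff₀ h1r, h9]
        linarith [mul_self_nonneg r]
      have n3 : ‖(↑(1 + r)⁻¹ : 𝕜) • K.smulRight (y i)‖ ≤ ‖K‖ := by
        rw [norm_ofReal_smul ((1 + r)⁻¹) (K.smulRight (y i)), abs_of_pos (inv_pos.mpr h1r), hRnorm]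
        exact mul_le_of_le_one_left (norm_nonneg K) hinvle
      have n4 : ‖(↑((1 + r)⁻¹ - 1) : 𝕜) • T‖ ≤ r := by
        rw [norm_ofReal_smul ((1 + r)⁻¹ - 1) T, hT, mul_one, abs_of_nonpos (by linarith)]
        linarith
      calc ‖(↑(1 + r)⁻¹ : 𝕜) • S₀ - T‖
          ≤ ‖(↑(1 + r)⁻¹ : 𝕜) • K.smulRight (y i)‖ + ‖(↑((1 + r)⁻¹ - 1) : 𝕜) • T‖ := by
            rw [e2]; exact norm_add_le _ _
      _ ≤ ‖K‖ + r := add_le_add n3 n4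
      _ ≤ (3 * δ + r) + r := by linarith
      _ < ε := by
            have h10 : ρ * ε₀ ≤ 1 * ε₀ := mul_le_mul_of_nonneg_right hρ1.le hε₀.le
            rw [hδdef, hrdef]; linarith
end

section
/- Let X, Y be Banach spaces and let Z be a one-complemented subspace of X. If the pair (X, Y) has property L_{p,o}, then so does the pair (Z, Y). -/
/-- If `Z` is a one-complemented subspace of `X` (witnessed by an isometric
embedding `E : Z → X` and a norm-one projection `P : X → Z` with `P ∘ E = id`) and `(X, Y)` has
property `L_{p,o}`, then so does `(Z, Y)`. -/
theorem lpo_of_oneComplemented (𝕜 X Y Z : Type*) [RCLike 𝕜] [NormedAddCommGroup X]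
    [NormedSpace 𝕜 X] [CompleteSpace X] [NormedAddCommGroup Y] [NormedSpace 𝕜 Y]
    [CompleteSpace Y] [NormedAddCommGroup Z] [NormedSpace 𝕜 Z] [CompleteSpace Z]
    (E : Z →ₗᵢ[𝕜] X) (P : X →L[𝕜] Z) (hP : ‖P‖ = 1) (hPE : ∀ z : Z, P (E z) = z)
    (h : HasLpo 𝕜 X Y) : HasLpo 𝕜 Z Y := by
  intro ε hε T hT
  set Ec := E.toContinuousLinearMap with hEcdef
  have hEnorm : ∀ z : Z, ‖Ec z‖ = ‖z‖ := E.norm_map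
  have hcomple : ∀ A : X →L[𝕜] Y, ‖A.comp Ec‖ ≤ ‖A‖ := fun A =>
    (A.comp Ec).opNorm_le_bound (norm_nonneg A) fun z => by
      rw [ContinuousLinearMap.comp_apply]
      calc ‖A (Ec z)‖ ≤ ‖A‖ * ‖Ec z‖ := A.le_opNorm _
        _ = ‖A‖ * ‖z‖ := by rw [hEnorm]
  set TP := T.comp P with hTPdef
  have hTPE : TP.comp Ec = T := by
    ext z
    simp [hTPdef, hEcdef, hPE z]
  have hTPnorm : ‖TP‖ = 1 := by
    refine le_antisymm ?_ ?_
    · calc ‖TP‖ ≤ ‖T‖ * ‖P‖ := T.opNorm_comp_le P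
        _ = 1 := by rw [hT, hP, one_mul]
    · calc (1:ℝ) = ‖T‖ := hT.symm
        _ = ‖TP.comp Ec‖ := by rw [hTPE]
        _ ≤ ‖TP‖ := hcomple TP
  obtain ⟨η, hη, hmain⟩ := h ε hε TP hTPnorm
  refine ⟨η, hη, fun z hz hTz => ?_⟩
  have hEz : ‖E z‖ = 1 := by rw [E.norm_map, hz]
  have hTPz : ‖TP (E z)‖ = ‖T z‖ := by simp [hTPdef, hPE z]
  obtain ⟨S, hS1, hS2, hS3⟩ := hmain (E z) hEz (by rw [hTPz]; exact hTz)
  refine ⟨S.comp Ec, ?_, ?_, ?_⟩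
  · refine le_antisymm ((hcomple S).trans_eq hS1) ?_
    have : ‖(S.comp Ec) z‖ ≤ ‖S.comp Ec‖ * ‖z‖ := (S.comp Ec).le_opNorm z
    simpa [hEcdef, hS2, hz] using this
  · simpa [hEcdef] using hS2
  · calc ‖S.comp Ec - T‖ = ‖(S - TP).comp Ec‖ := by
          rw [ContinuousLinearMap.sub_comp, hTPE]
      _ ≤ ‖S - TP‖ := hcomple _
      _ < ε := hS3
end

section
/- Let X, Y be Banach spaces and let Z be a one-complemented subspace of X. If the pair (X, Y) has property L_{o,p}, then so does the pair (Z, Y). -/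
/-- If `Z` is a one-complemented subspace of `X` (witnessed by an isometric
embedding `E : Z → X` and a norm-one projection `P : X → Z` with `P ∘ E = id`) and `(X, Y)` has
property `L_{o,p}`, then so does `(Z, Y)`. -/
theorem lop_of_oneComplemented (𝕜 X Y Z : Type*) [RCLike 𝕜] [NormedAddCommGroup X]
    [NormedSpace 𝕜 X] [CompleteSpace X] [NormedAddCommGroup Y] [NormedSpace 𝕜 Y]
    [CompleteSpace Y] [NormedAddCommGroup Z] [NormedSpace 𝕜 Z] [CompleteSpace Z]
    (E : Z →ₗᵢ[𝕜] X) (P : X →L[𝕜] Z) (hP : ‖P‖ = 1) (hPE : ∀ z : Z, P (E z) = z)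
    (h : HasLop 𝕜 X Y) : HasLop 𝕜 Z Y := by
  intro ε hε z hz
  have hEz : ‖E z‖ = 1 := by rw [E.norm_map]; exact hz
  obtain ⟨η, hη, hmain⟩ := h ε hε (E z) hEz
  refine ⟨η, hη, fun T hT hTz => ?_⟩
  set S : X →L[𝕜] Y := T.comp P with hS
  have hSE : ∀ z' : Z, S (E z') = T z' := fun z' => by
    simp [hS, hPE z']
  have hSnorm : ‖S‖ = 1 := by
    apply le_antisymm
    · calc ‖S‖ ≤ ‖T‖ * ‖P‖ := T.opNorm_comp_le P
        _ = 1 := by rw [hT, hP, one_mul]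
    · rw [← hT]
      refine T.opNorm_le_bound (by positivity) (fun z' => ?_)
      rw [← hSE z']
      calc ‖S (E z')‖ ≤ ‖S‖ * ‖E z'‖ := S.le_opNorm _
        _ = ‖S‖ * ‖z'‖ := by rw [E.norm_map]
  have hSz : 1 - η < ‖S (E z)‖ := by rw [hSE]; exact hTz
  obtain ⟨x₀, hx₀, hSx₀, hdist⟩ := hmain S hSnorm hSz
  refine ⟨P x₀, ?_, ?_, ?_⟩
  · have h1 : ‖P x₀‖ ≤ 1 := by
      calc ‖P x₀‖ ≤ ‖P‖ * ‖x₀‖ := P.le_opNorm _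
        _ = 1 := by rw [hP, hx₀, one_mul]
    have h2 : (1:ℝ) ≤ ‖P x₀‖ := by
      have := T.le_opNorm (P x₀)
      rw [hT, one_mul] at this
      calc (1:ℝ) = ‖T (P x₀)‖ := by rw [← hSx₀]; rfl
        _ ≤ ‖P x₀‖ := this
    linarith
  · rw [← hSx₀]; rfl
  · calc ‖P x₀ - z‖ = ‖P (x₀ - E z)‖ := by rw [map_sub, hPE]
      _ ≤ ‖P‖ * ‖x₀ - E z‖ := P.le_opNorm _
      _ = ‖x₀ - E z‖ := by rw [hP, one_mul]
      _ < ε := hdist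
end

section
/- Let X and Y be Banach spaces. If the pair (X, Y) has property L_{o,p}, then the pair (X, 𝕂) has property L_{o,p}. -/
/-- If `(X, Y)` has property `L_{o,p}` (with `Y` nontrivial), then `(X, 𝕜)`
has property `L_{o,p}`. -/
theorem scalar_lop_of_lop (𝕜 X Y : Type*) [RCLike 𝕜] [NormedAddCommGroup X]
    [NormedSpace 𝕜 X] [CompleteSpace X] [NormedAddCommGroup Y] [NormedSpace 𝕜 Y]
    [CompleteSpace Y] (hY : ∃ y₀ : Y, ‖y₀‖ = 1)
    (h : HasLop 𝕜 X Y) : HasLop 𝕜 X 𝕜 := by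
  obtain ⟨y₀, hy₀⟩ := hY
  intro ε hε x hx
  obtain ⟨η, hη, hη'⟩ := h ε hε x hx
  refine ⟨η, hη, fun f hf hfx => ?_⟩
  set T : X →L[𝕜] Y := f.smulRight y₀ with hT
  have hTnorm : ‖T‖ = 1 := by
    rw [hT, ContinuousLinearMap.norm_smulRight_apply, hf, hy₀, one_mul]
  have hTapp : ∀ z : X, ‖T z‖ = ‖f z‖ := fun z => by
    simp [hT, norm_smul, hy₀]
  obtain ⟨x₀, hx₀, hTx₀, hdist⟩ := hη' T hTnorm (by rw [hTapp]; exact hfx)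
  exact ⟨x₀, hx₀, by rw [← hTapp]; exact hTx₀, hdist⟩
end

section
/- Let X and Y be Banach spaces. If the pair (X, Y) has property L_{p,o}, then the pair (X, 𝕂) has property L_{p,o}. -/
/-!
Embed the functional `f` as the rank-one operator `T = f(·) y₀`. Property `L_{p,o}` of `(X, Y)`
gives `S` attaining its norm at `x` close to `T`; composing with a functional `φ` that norms
`S x` yields a norm-one functional `φ ∘ S` attaining its norm at `x`, and
`φ ∘ S - φ(y₀) f = φ ∘ (S - T)` is small. Multiplying by a unimodular scalar removes the phase
of `φ(y₀)`, whose modulus is close to `1` because `‖φ ∘ S‖ = ‖f‖ = 1`.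
-/

open ContinuousLinearMap

lemma exists_norm_eq_one_norm_smul_sub_le {𝕜 E : Type*} [RCLike 𝕜] [NormedAddCommGroup E]
    [NormedSpace 𝕜 E] {f g : E} (hf : ‖f‖ = 1) (hg : ‖g‖ = 1) (a : 𝕜) :
    ∃ u : 𝕜, ‖u‖ = 1 ∧ ‖u • g - f‖ ≤ 2 * ‖g - a • f‖ := by
  obtain ⟨u, hu, hua⟩ := RCLike.exists_norm_eq_mul_self a
  refine ⟨u, hu, ?_⟩
  have hmodulus : |‖a‖ - 1| ≤ ‖g - a • f‖ := by
    simpa [norm_smul, hf, hg, abs_sub_comm] using abs_norm_sub_norm_le g (a • f)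
  calc ‖u • g - f‖ = ‖u • (g - a • f) + ((‖a‖ - 1 : ℝ) : 𝕜) • f‖ := by
        rw [smul_sub, smul_smul, ← hua]
        congr 1
        simp only [RCLike.ofReal_sub, RCLike.ofReal_one, sub_smul, one_smul]
        abel
    _ ≤ ‖g - a • f‖ + |‖a‖ - 1| := by
        refine (norm_add_le _ _).trans_eq ?_
        rw [norm_smul, norm_smul, hu, hf, RCLike.norm_ofReal, one_mul, mul_one]
    _ ≤ 2 * ‖g - a • f‖ := by linarith

lemma norm_comp_le_of_norm_le_one {𝕜 X Y Z : Type*} [RCLike 𝕜] [NormedAddCommGroup X]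
    [NormedSpace 𝕜 X] [NormedAddCommGroup Y] [NormedSpace 𝕜 Y] [NormedAddCommGroup Z]
    [NormedSpace 𝕜 Z] {φ : Y →L[𝕜] Z} (hφ : ‖φ‖ ≤ 1) (S : X →L[𝕜] Y) : ‖φ.comp S‖ ≤ ‖S‖ :=
  (opNorm_comp_le φ S).trans (mul_le_of_le_one_left (norm_nonneg S) hφ)

lemma comp_sub_smulRight {𝕜 X Y : Type*} [RCLike 𝕜] [NormedAddCommGroup X] [NormedSpace 𝕜 X]
    [NormedAddCommGroup Y] [NormedSpace 𝕜 Y] (φ : StrongDual 𝕜 Y) (S : X →L[𝕜] Y)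
    (f : StrongDual 𝕜 X) (y : Y) :
    φ.comp (S - f.smulRight y) = φ.comp S - φ y • f := by
  ext z
  simp [mul_comm]

theorem scalar_lpo_of_lpo_general (𝕜 X Y : Type*) [RCLike 𝕜] [NormedAddCommGroup X]
    [NormedSpace 𝕜 X] [NormedAddCommGroup Y] [NormedSpace 𝕜 Y]
    (hY : ∃ y₀ : Y, ‖y₀‖ = 1)
    (h : HasLpo 𝕜 X Y) : HasLpo 𝕜 X 𝕜 := by
  obtain ⟨y₀, hy₀⟩ := hY
  intro ε hε f hf
  have hT : ‖f.smulRight y₀‖ = 1 := by rw [norm_smulRight_apply, hf, hy₀, one_mul]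
  obtain ⟨η, hη, hlpo⟩ := h (ε / 2) (half_pos hε) _ hT
  refine ⟨η, hη, fun x hx hfx => ?_⟩
  obtain ⟨S, hS, hSx, hST⟩ := hlpo x hx (by simpa [norm_smul, hy₀] using hfx)
  obtain ⟨φ, hφ, hφSx⟩ := exists_dual_vector'' 𝕜 (S x)
  have hgx : ‖φ.comp S x‖ = 1 := by simp [hφSx, hSx]
  have hg : ‖φ.comp S‖ = 1 := by
    refine le_antisymm ?_ ?_
    · exact hS ▸ norm_comp_le_of_norm_le_one hφ S
    · exact hgx ▸ (φ.comp S).unit_le_opNorm x hx.le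
  obtain ⟨u, hu, hclose⟩ := exists_norm_eq_one_norm_smul_sub_le hf hg (φ y₀)
  refine ⟨u • φ.comp S, by rw [norm_smul, hu, hg, one_mul],
    by rw [smul_apply, norm_smul, hu, hgx, one_mul], ?_⟩
  calc ‖u • φ.comp S - f‖ ≤ 2 * ‖φ.comp (S - f.smulRight y₀)‖ := by
        rwa [comp_sub_smulRight]
    _ ≤ 2 * ‖S - f.smulRight y₀‖ := by
        gcongr
        exact norm_comp_le_of_norm_le_one hφ _
    _ < ε := by linarith

/-- If `(X, Y)` has property `L_{p,o}` (with `Y` nontrivial), then `(X, 𝕜)`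
has property `L_{p,o}`. -/
theorem scalar_lpo_of_lpo (𝕜 X Y : Type*) [RCLike 𝕜] [NormedAddCommGroup X]
    [NormedSpace 𝕜 X] [CompleteSpace X] [NormedAddCommGroup Y] [NormedSpace 𝕜 Y]
    [CompleteSpace Y] (hY : ∃ y₀ : Y, ‖y₀‖ = 1)
    (h : HasLpo 𝕜 X Y) : HasLpo 𝕜 X 𝕜 :=
  scalar_lpo_of_lpo_general 𝕜 X Y hY h
end

section
/- For every Banach space Y, the pairs (ℓ₁, Y) and (c₀, Y) fail both property L_{o,p} and property L_{p,o}. -/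
open ZeroAtInfty

namespace ZeroAtInftyContinuousMap

variable {α β : Type*} [TopologicalSpace α]

section Single

variable [DiscreteTopology α] [DecidableEq α] [Zero β] [TopologicalSpace β]

def single (i : α) (b : β) : C₀(α, β) where
  toFun := (Pi.single i b : α → β)
  continuous_toFun := continuous_of_discreteTopology
  zero_at_infty' := by
    rw [Filter.cocompact_eq_cofinite]
    exact tendsto_const_nhds.congr'
      ((Filter.eventually_cofinite_ne i).mono fun n hn => by simp [hn])

@[simp]
theorem single_apply (i : α) (b : β) (n : α) : single i b n = (Pi.single i b : α → β) n := rfl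

@[simp]
theorem single_zero (i : α) : single i (0 : β) = 0 := by
  ext; simp

end Single

section Normed

variable [NormedAddCommGroup β]

theorem norm_apply_le (f : C₀(α, β)) (x : α) : ‖f x‖ ≤ ‖f‖ :=
  f.toBCF.norm_coe_le_norm x

theorem norm_le {f : C₀(α, β)} {C : ℝ} (hC : 0 ≤ C) : ‖f‖ ≤ C ↔ ∀ x, ‖f x‖ ≤ C :=
  BoundedContinuousFunction.norm_le (f := f.toBCF) hC

theorem norm_single_add_single [DiscreteTopology α] [DecidableEq α] {i j : α} (hij : i ≠ j)
    (a b : β) : ‖single i a + single j b‖ = max ‖a‖ ‖b‖ := by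
  refine le_antisymm ((norm_le (by positivity)).2 fun n => ?_) (max_le ?_ ?_)
  · by_cases hni : n = i
    · simp [hni, hij]
    · by_cases hnj : n = j
      · simp [hnj, hij.symm]
      · simp [hni, hnj]
  · simpa [hij.symm] using norm_apply_le (single i a + single j b) i
  · simpa [hij] using norm_apply_le (single i a + single j b) j

variable (𝕜 : Type*) [NontriviallyNormedField 𝕜] [NormedSpace 𝕜 β]

noncomputable def evalCLM (x : α) : C₀(α, β) →L[𝕜] β :=
  LinearMap.mkContinuous
    { toFun := fun f => f x
      map_add' := fun _ _ => rfl
      map_smul' := fun _ _ => rfl }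
    1 fun f => by simpa using norm_apply_le f x

variable {𝕜}

@[simp]
theorem evalCLM_apply (x : α) (f : C₀(α, β)) : evalCLM 𝕜 x f = f x := rfl

theorem norm_smul_evalCLM_add_smul_evalCLM_le (x y : α) (c d : 𝕜) :
    ‖c • (evalCLM 𝕜 x : C₀(α, 𝕜) →L[𝕜] 𝕜) + d • evalCLM 𝕜 y‖ ≤ ‖c‖ + ‖d‖ := by
  refine ContinuousLinearMap.opNorm_le_bound _ (by positivity) fun f => ?_
  calc ‖c * f x + d * f y‖ ≤ ‖c‖ * ‖f x‖ + ‖d‖ * ‖f y‖ := by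
        simpa only [norm_mul] using norm_add_le (c * f x) (d * f y)
    _ ≤ (‖c‖ + ‖d‖) * ‖f‖ := by
        rw [add_mul]; gcongr <;> exact norm_apply_le f _

end Normed

end ZeroAtInftyContinuousMap

section Lp

variable {α : Type*}

theorem lp.norm_apply_add_norm_apply_le {E : α → Type*} [∀ i, NormedAddCommGroup (E i)]
    (f : lp E 1) {i j : α} (hij : i ≠ j) : ‖f i‖ + ‖f j‖ ≤ ‖f‖ := by
  classical
  simpa [Finset.sum_pair hij] using lp.sum_rpow_le_norm_rpow (by norm_num) f {i, j}

theorem lp.norm_single_add_single {β : Type*} [NormedAddCommGroup β] [DecidableEq α] {i j : α}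
    (hij : i ≠ j) (a b : β) :
    ‖(lp.single 1 i a + lp.single 1 j b : lp (fun _ : α => β) 1)‖ = ‖a‖ + ‖b‖ := by
  refine le_antisymm ?_ ?_
  · refine (norm_add_le _ _).trans ?_
    rw [lp.norm_single one_pos, lp.norm_single one_pos]
  · have h := lp.norm_apply_add_norm_apply_le
      (lp.single 1 i a + lp.single 1 j b : lp (fun _ : α => β) 1) hij
    simpa [Pi.single_apply, hij, hij.symm] using h

variable {𝕜 : Type*} [NontriviallyNormedField 𝕜]

theorem lp.norm_evalCLM_le (E : α → Type*) [∀ i, NormedAddCommGroup (E i)]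
    [∀ i, NormedSpace 𝕜 (E i)] (p : ENNReal) [Fact (1 ≤ p)] (i : α) :
    ‖lp.evalCLM 𝕜 E p i‖ ≤ 1 :=
  LinearMap.mkContinuous_norm_le _ zero_le_one _

theorem lp.norm_smul_evalCLM_add_smul_evalCLM_le {i j : α} (hij : i ≠ j) (c d : 𝕜) :
    ‖c • lp.evalCLM 𝕜 (fun _ : α => 𝕜) 1 i + d • lp.evalCLM 𝕜 (fun _ : α => 𝕜) 1 j‖ ≤
      max ‖c‖ ‖d‖ := by
  refine ContinuousLinearMap.opNorm_le_bound _ (by positivity) fun f => ?_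
  calc ‖c * f i + d * f j‖ ≤ ‖c‖ * ‖f i‖ + ‖d‖ * ‖f j‖ := by
        simpa only [norm_mul] using norm_add_le (c * f i) (d * f j)
    _ ≤ max ‖c‖ ‖d‖ * (‖f i‖ + ‖f j‖) := by
        rw [mul_add]; gcongr; exacts [le_max_left _ _, le_max_right _ _]
    _ ≤ max ‖c‖ ‖d‖ * ‖f‖ := by gcongr; exact lp.norm_apply_add_norm_apply_le f hij

end Lp

theorem one_le_of_one_le_sub_mul_add_mul {s a b : ℝ} (hs₀ : 0 < s) (hs₁ : s ≤ 1) (ha : a ≤ 1)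
    (h : 1 ≤ (1 - s) * a + s * b) : 1 ≤ b := by
  nlinarith

section

variable {𝕜 : Type*} [RCLike 𝕜]

section RankOne

variable {X Y : Type*} [NormedAddCommGroup X] [NormedSpace 𝕜 X] [NormedAddCommGroup Y]
  [NormedSpace 𝕜 Y]

theorem not_hasLop_of_functionals {y₀ : Y} (hy₀ : ‖y₀‖ = 1) {x : X} (hx : ‖x‖ = 1) {ε : ℝ}
    (hε : 0 < ε)
    (h : ∀ δ : ℝ, 0 < δ → δ < 1 → ∃ φ : X →L[𝕜] 𝕜, ‖φ‖ = 1 ∧ 1 - δ ≤ ‖φ x‖ ∧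
      ∀ z, ‖z‖ = 1 → ‖φ z‖ = 1 → ε ≤ ‖z - x‖) :
    ¬ HasLop 𝕜 X Y := by
  intro H
  obtain ⟨η, hη, hη_spec⟩ := H ε hε x hx
  obtain ⟨δ, hδ₀, hδ⟩ := exists_between (lt_min hη one_pos)
  obtain ⟨φ, hφ, hφx, hφ_far⟩ := h δ hδ₀ (hδ.trans_le (min_le_right _ _))
  have hT_apply (z : X) : ‖φ.smulRight y₀ z‖ = ‖φ z‖ := by
    rw [ContinuousLinearMap.smulRight_apply, norm_smul, hy₀, mul_one]
  obtain ⟨z, hz, hTz, hz_near⟩ := hη_spec (φ.smulRight y₀)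
    (by rw [ContinuousLinearMap.norm_smulRight_apply, hφ, hy₀, mul_one])
    (by rw [hT_apply]; linarith [min_le_left η 1])
  exact (hφ_far z hz (hT_apply z ▸ hTz)).not_gt hz_near

theorem not_hasLpo_of_segment {T : X →L[𝕜] Y} (hT : ‖T‖ = 1) {u v : X} (hu : ‖u‖ ≤ 1)
    (hv : ‖v‖ ≤ 1) (hTu : ‖T u‖ = 1) (hTv : T v = 0)
    (hseg : ∀ s : ℝ, 0 < s → s < 1 → ‖((1 - s : ℝ) : 𝕜) • u + (s : 𝕜) • v‖ = 1) :
    ¬ HasLpo 𝕜 X Y := by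
  intro H
  obtain ⟨η, hη, hη_spec⟩ := H 1 one_pos T hT
  obtain ⟨s, hs₀, hs⟩ := exists_between (lt_min hη one_pos)
  have hs₁ : s < 1 := hs.trans_le (min_le_right _ _)
  set x := ((1 - s : ℝ) : 𝕜) • u + (s : 𝕜) • v
  have hTx : ‖T x‖ = 1 - s := by
    rw [map_add, map_smul, map_smul, hTv, smul_zero, add_zero, norm_smul, hTu, mul_one,
      RCLike.norm_ofReal, abs_of_pos (by linarith)]
  obtain ⟨S, hS, hSx, hST⟩ := hη_spec x (hseg s hs₀ hs₁) (by rw [hTx]; linarith [min_le_left η 1])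
  have hSv : 1 ≤ ‖S v‖ := by
    refine one_le_of_one_le_sub_mul_add_mul hs₀ hs₁.le (hS ▸ S.unit_le_opNorm u hu) ?_
    calc (1 : ℝ) = ‖S x‖ := hSx.symm
      _ ≤ ‖((1 - s : ℝ) : 𝕜)‖ * ‖S u‖ + ‖(s : 𝕜)‖ * ‖S v‖ := by
        rw [map_add, map_smul, map_smul, ← norm_smul, ← norm_smul]
        exact norm_add_le _ _
      _ = (1 - s) * ‖S u‖ + s * ‖S v‖ := by
        rw [RCLike.norm_ofReal, RCLike.norm_ofReal, abs_of_pos (by linarith), abs_of_pos hs₀]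
  have hSTv : ‖S v‖ ≤ ‖S - T‖ := by
    simpa [hTv] using (S - T).unit_le_opNorm v hv
  linarith

end RankOne

section Sequences

variable {Y : Type*} [NormedAddCommGroup Y] [NormedSpace 𝕜 Y] {y₀ : Y}

theorem not_hasLop_lp_one (hy₀ : ‖y₀‖ = 1) : ¬ HasLop 𝕜 (lp (fun _ : ℕ => 𝕜) 1) Y := by
  set e : ℕ → lp (fun _ : ℕ => 𝕜) 1 := fun i => lp.single 1 i 1
  have he (i : ℕ) : ‖e i‖ = 1 := by simp [e, lp.norm_single one_pos]
  refine not_hasLop_of_functionals hy₀ (he 0) one_pos fun δ hδ₀ hδ₁ => ?_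
  set φ := ((1 - δ : ℝ) : 𝕜) • lp.evalCLM 𝕜 (fun _ : ℕ => 𝕜) 1 0 +
    (1 : 𝕜) • lp.evalCLM 𝕜 (fun _ : ℕ => 𝕜) 1 1
  have hφ_apply (z : lp (fun _ : ℕ => 𝕜) 1) : φ z = ((1 - δ : ℝ) : 𝕜) * z 0 + z 1 := by
    simp [φ, lp.evalCLM]
  refine ⟨φ, le_antisymm ?_ ?_, ?_, fun z hz hφz => ?_⟩
  · refine (lp.norm_smul_evalCLM_add_smul_evalCLM_le zero_ne_one _ _).trans (max_le ?_ ?_)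
    · rw [RCLike.norm_of_nonneg (by linarith)]; linarith
    · rw [norm_one]
  · simpa [hφ_apply, e] using φ.unit_le_opNorm (e 1) (he 1).le
  · have hφ₀ : φ (e 0) = ((1 - δ : ℝ) : 𝕜) := by simp [hφ_apply, e]
    rw [hφ₀, RCLike.norm_of_nonneg (by linarith)]
  · have hz₀ : z 0 = 0 := by
      have hcoord := hz ▸ lp.norm_apply_add_norm_apply_le z zero_ne_one
      have hφz_le : 1 ≤ (1 - δ) * ‖z 0‖ + ‖z 1‖ := by
        calc 1 = ‖φ z‖ := hφz.symm
          _ ≤ ‖((1 - δ : ℝ) : 𝕜)‖ * ‖z 0‖ + ‖z 1‖ := by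
            rw [hφ_apply, ← norm_mul]; exact norm_add_le _ _
          _ = (1 - δ) * ‖z 0‖ + ‖z 1‖ := by rw [RCLike.norm_of_nonneg (by linarith)]
      exact norm_le_zero_iff.1 (by nlinarith [norm_nonneg (z 0)])
    calc 1 = ‖(z - e 0) 0‖ := by simp [hz₀, e]
      _ ≤ ‖z - e 0‖ := lp.norm_apply_le_norm one_ne_zero _ 0

theorem not_hasLpo_lp_one (hy₀ : ‖y₀‖ = 1) : ¬ HasLpo 𝕜 (lp (fun _ : ℕ => 𝕜) 1) Y := by
  set e : ℕ → lp (fun _ : ℕ => 𝕜) 1 := fun i => lp.single 1 i 1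
  have he (i : ℕ) : ‖e i‖ = 1 := by simp [e, lp.norm_single one_pos]
  set T := (lp.evalCLM 𝕜 (fun _ : ℕ => 𝕜) 1 0).smulRight y₀
  have hT_apply (z : lp (fun _ : ℕ => 𝕜) 1) : T z = z 0 • y₀ := rfl
  refine not_hasLpo_of_segment (T := T) (le_antisymm ?_ ?_) (he 0).le (he 1).le ?_ ?_
    fun s hs₀ hs₁ => ?_
  · rw [ContinuousLinearMap.norm_smulRight_apply, hy₀, mul_one]
    exact lp.norm_evalCLM_le _ _ _
  · simpa [hT_apply, e, hy₀] using T.unit_le_opNorm (e 0) (he 0).le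
  · simp [hT_apply, e, hy₀]
  · simp [hT_apply, e]
  · simp only [e, ← lp.single_smul, smul_eq_mul, mul_one]
    rw [lp.norm_single_add_single zero_ne_one, RCLike.norm_of_nonneg (by linarith),
      RCLike.norm_of_nonneg hs₀.le, sub_add_cancel]

open ZeroAtInftyContinuousMap in
theorem not_hasLop_zeroAtInfty (hy₀ : ‖y₀‖ = 1) : ¬ HasLop 𝕜 C₀(ℕ, 𝕜) Y := by
  have hpair (a b : 𝕜) : ‖single 0 a + single 1 b‖ = max ‖a‖ ‖b‖ :=
    norm_single_add_single zero_ne_one a b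
  have he₀ : ‖(single 0 1 : C₀(ℕ, 𝕜))‖ = 1 := by simpa using hpair 1 0
  refine not_hasLop_of_functionals hy₀ he₀ one_pos fun δ hδ₀ hδ₁ => ?_
  set φ := ((1 - δ : ℝ) : 𝕜) • (evalCLM 𝕜 0 : C₀(ℕ, 𝕜) →L[𝕜] 𝕜) + (δ : 𝕜) • evalCLM 𝕜 1
  have hφ_apply (z : C₀(ℕ, 𝕜)) : φ z = ((1 - δ : ℝ) : 𝕜) * z 0 + (δ : 𝕜) * z 1 := rfl
  have hnorm_sub : ‖((1 - δ : ℝ) : 𝕜)‖ = 1 - δ := RCLike.norm_of_nonneg (by linarith)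
  have hnorm : ‖(δ : 𝕜)‖ = δ := RCLike.norm_of_nonneg hδ₀.le
  have hφ₀ : φ (single 0 1) = ((1 - δ : ℝ) : 𝕜) := by simp [hφ_apply]
  have hφ₁ : φ (single 1 1) = (δ : 𝕜) := by simp [hφ_apply]
  refine ⟨φ, le_antisymm ?_ ?_, ?_, fun z hz hφz => ?_⟩
  · refine (norm_smul_evalCLM_add_smul_evalCLM_le 0 1 _ _).trans ?_
    rw [hnorm_sub, hnorm, sub_add_cancel]
  · have h := φ.unit_le_opNorm (single 0 1 + single 1 1) (by simp [hpair])
    rwa [map_add, hφ₀, hφ₁, ← RCLike.ofReal_add, sub_add_cancel, RCLike.ofReal_one,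
      norm_one] at h
  · rw [hφ₀, hnorm_sub]
  · have hz₁ : 1 ≤ ‖z 1‖ := by
      refine one_le_of_one_le_sub_mul_add_mul hδ₀ hδ₁.le (hz ▸ norm_apply_le z 0) ?_
      calc 1 = ‖φ z‖ := hφz.symm
        _ ≤ ‖((1 - δ : ℝ) : 𝕜)‖ * ‖z 0‖ + ‖(δ : 𝕜)‖ * ‖z 1‖ := by
          rw [hφ_apply, ← norm_mul, ← norm_mul]; exact norm_add_le _ _
        _ = (1 - δ) * ‖z 0‖ + δ * ‖z 1‖ := by rw [hnorm_sub, hnorm]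
    calc 1 ≤ ‖(z - single 0 1 : C₀(ℕ, 𝕜)) 1‖ := by simpa using hz₁
      _ ≤ ‖z - single 0 1‖ := norm_apply_le _ 1

open ZeroAtInftyContinuousMap in
theorem not_hasLpo_zeroAtInfty (hy₀ : ‖y₀‖ = 1) : ¬ HasLpo 𝕜 C₀(ℕ, 𝕜) Y := by
  have hpair (a b : 𝕜) : ‖single 0 a + single 1 b‖ = max ‖a‖ ‖b‖ :=
    norm_single_add_single zero_ne_one a b
  set φ := (2⁻¹ : 𝕜) • (evalCLM 𝕜 0 : C₀(ℕ, 𝕜) →L[𝕜] 𝕜) + (2⁻¹ : 𝕜) • evalCLM 𝕜 1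
  set T := φ.smulRight y₀
  have hT_apply (z : C₀(ℕ, 𝕜)) : T z = (2⁻¹ * z 0 + 2⁻¹ * z 1) • y₀ := rfl
  set u : C₀(ℕ, 𝕜) := single 0 1 + single 1 1
  set v : C₀(ℕ, 𝕜) := single 0 1 + single 1 (-1)
  have hTu : T u = y₀ := by norm_num [hT_apply, u]
  refine not_hasLpo_of_segment (T := T) (u := u) (v := v) (le_antisymm ?_ ?_) (by simp [u, hpair])
    (by simp [v, hpair]) (by rw [hTu, hy₀]) (by simp [hT_apply, v]) fun s hs₀ hs₁ => ?_
  · rw [ContinuousLinearMap.norm_smulRight_apply, hy₀, mul_one]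
    refine (norm_smul_evalCLM_add_smul_evalCLM_le 0 1 _ _).trans_eq ?_
    norm_num
  · simpa [hTu, hy₀] using T.unit_le_opNorm u (by simp [u, hpair])
  · have hx : ((1 - s : ℝ) : 𝕜) • u + (s : 𝕜) • v =
        single 0 1 + single 1 ((1 - 2 * s : ℝ) : 𝕜) := by
      ext n
      rcases n with _ | _ | n <;> simp [u, v, RCLike.real_smul_eq_coe_mul, map_ofNat]
      ring
    rw [hx, hpair, norm_one, RCLike.norm_ofReal]
    exact max_eq_left (abs_le.2 ⟨by linarith, by linarith⟩)

end Sequences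

end

theorem l1_c0_fail_lop_lpo_general (𝕜 Y : Type*) [RCLike 𝕜] [NormedAddCommGroup Y]
    [NormedSpace 𝕜 Y] (hY : ∃ y₀ : Y, ‖y₀‖ = 1) :
    ¬ HasLop 𝕜 (lp (fun _ : ℕ => 𝕜) 1) Y ∧ ¬ HasLpo 𝕜 (lp (fun _ : ℕ => 𝕜) 1) Y ∧
    ¬ HasLop 𝕜 (C₀(ℕ, 𝕜)) Y ∧ ¬ HasLpo 𝕜 (C₀(ℕ, 𝕜)) Y := by
  obtain ⟨y₀, hy₀⟩ := hY
  exact ⟨not_hasLop_lp_one hy₀, not_hasLpo_lp_one hy₀, not_hasLop_zeroAtInfty hy₀,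
    not_hasLpo_zeroAtInfty hy₀⟩

/-- For every nontrivial Banach space `Y`, the pairs `(ℓ₁, Y)` and `(c₀, Y)`
fail both property `L_{o,p}` and property `L_{p,o}`. -/
theorem l1_c0_fail_lop_lpo (𝕜 Y : Type*) [RCLike 𝕜] [NormedAddCommGroup Y]
    [NormedSpace 𝕜 Y] [CompleteSpace Y] (hY : ∃ y₀ : Y, ‖y₀‖ = 1) :
    ¬ HasLop 𝕜 (lp (fun _ : ℕ => 𝕜) 1) Y ∧ ¬ HasLpo 𝕜 (lp (fun _ : ℕ => 𝕜) 1) Y ∧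
    ¬ HasLop 𝕜 (C₀(ℕ, 𝕜)) Y ∧ ¬ HasLpo 𝕜 (C₀(ℕ, 𝕜)) Y :=
  l1_c0_fail_lop_lpo_general 𝕜 Y hY
end
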